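/- arXiv:1902.09512 — 9 statements merged into one kernel-verified Lean document; each statement's English description precedes it below -/
import Mathlib

section
/- Let N ≥ 1 and K ≥ 1 be integers, and let m = (m_1, …, m_N) and m' = (m'_1, …, m'_N) be storage vectors with 0 ≤ m_n ≤ 1 and 0 ≤ m'_n ≤ 1 for all n, such that ∑_{n=1}^N m_n = ∑_{n=1}^N m'_n ≥ 1. Then the placement linear programs P(m) and P(m') have the same minimum objective value: D*(m) = D*(m'). In particular, D*(m) = D*(m̄), where m̄ is the homogeneous storage vector with m̄_n = (1/N)·∑_{k=1}^N m_k for every n. -/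
/-!
The value of `P(m)` depends on `m` only through `M = ∑ m_n`: with `t = ⌊M⌋`, it is the value
at `M` of the secant of `ℓ ↦ D̃_ℓ` through `t` and `t + 1`. Since `D̃` is convex and
nonincreasing in `ℓ`, this secant lies below `D̃` at every positive integer and is nonincreasing,
while a feasible `α` uses total storage `∑_S α_S |S| ≤ M`; so every objective value is at least
the secant at `M`. Conversely, every `m ∈ [0,1]^N` with `t ≤ M ≤ t + 1` is a mixture of
`0/1` vectors with `t` or `t + 1` ones: shift mass between two fractional coordinates until one of
them becomes integral, and induct on the number of fractional coordinates. The placement given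
by this mixture attains the bound.
-/

open Finset

/-- Optimal normalized PIR download cost for `ℓ` replicated databases and `K` messages:
`D̃_ℓ = ∑_{i=0}^{K-1} (1/ℓ)^i`. -/
noncomputable def Dt (K ℓ : ℕ) : ℝ := ∑ i ∈ Finset.range K, (1 / (ℓ : ℝ)) ^ i

/-- Feasibility for the placement linear program `P(m)`: the variables `α_S` are indexed by
nonempty subsets `S ⊆ [N]`; they are nonnegative, sum to `1`, and respect the per-database
storage constraints. -/
def PFeasible {N : ℕ} (m : Fin N → ℝ) (α : Finset (Fin N) → ℝ) : Prop :=
  (∀ S : Finset (Fin N), S.Nonempty → 0 ≤ α S) ∧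
  (∑ S ∈ Finset.univ.filter (fun S : Finset (Fin N) => S.Nonempty), α S) = 1 ∧
  ∀ n : Fin N, (∑ S ∈ Finset.univ.filter (fun S : Finset (Fin N) => n ∈ S), α S) ≤ m n

/-- Objective value of the placement LP: `∑_S α_S · D̃_{|S|}`. -/
noncomputable def PObj (N K : ℕ) (α : Finset (Fin N) → ℝ) : ℝ :=
  ∑ S ∈ Finset.univ.filter (fun S : Finset (Fin N) => S.Nonempty), α S * Dt K S.card

/-- `D*(m)`: the minimum objective value of the placement LP `P(m)`. -/
noncomputable def Dstar (N K : ℕ) (m : Fin N → ℝ) : ℝ :=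
  sInf {d : ℝ | ∃ α : Finset (Fin N) → ℝ, PFeasible m α ∧ PObj N K α = d}

theorem ConvexOn.secant_le_of_notMem_Ioo {𝕜 : Type*} [Field 𝕜] [LinearOrder 𝕜]
    [IsStrictOrderedRing 𝕜] {s : Set 𝕜} {f : 𝕜 → 𝕜} (hf : ConvexOn 𝕜 s f) {a b x : 𝕜}
    (ha : a ∈ s) (hb : b ∈ s) (hx : x ∈ s) (hab : a < b) (hxab : x ∉ Set.Ioo a b) :
    f a + (x - a) * ((f b - f a) / (b - a)) ≤ f x := by
  rcases lt_trichotomy x a with hxa | rfl | hax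
  · have h := hf.secant_mono ha hx hb hxa.ne hab.ne' (hxa.trans hab).le
    rw [div_le_iff_of_neg (sub_neg.2 hxa)] at h
    linarith
  · simp
  · have hbx : b ≤ x := not_lt.1 fun hxb => hxab ⟨hax, hxb⟩
    have h := hf.secant_mono ha hb hx hab.ne' hax.ne' hbx
    rw [le_div_iff₀ (sub_pos.2 hax)] at h
    linarith

theorem Convex.mem_of_add_smul_mem_of_sub_smul_mem {𝕜 E : Type*} [Field 𝕜] [LinearOrder 𝕜]
    [IsStrictOrderedRing 𝕜] [AddCommGroup E] [Module 𝕜 E] {s : Set E} (hs : Convex 𝕜 s) {x d : E}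
    {a b : 𝕜} (ha : 0 < a) (hb : 0 < b)
    (hxa : x + a • d ∈ s) (hxb : x - b • d ∈ s) : x ∈ s := by
  convert hs hxa hxb (by positivity : 0 ≤ b / (a + b)) (by positivity : 0 ≤ a / (a + b))
    (by field_simp; ring) using 1
  match_scalars <;> field_simp <;> ring

noncomputable def dtChord (K t : ℕ) (x : ℝ) : ℝ := Dt K t + (x - t) * (Dt K (t + 1) - Dt K t)

lemma Dt_eq_sum_zpow (K ℓ : ℕ) : Dt K ℓ = ∑ i ∈ range K, (ℓ : ℝ) ^ (-(i : ℤ)) := by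
  simp only [Dt, zpow_neg, zpow_natCast, one_div, inv_pow]

lemma dtChord_le_Dt (K : ℕ) {t ℓ : ℕ} (ht : 1 ≤ t) (hℓ : 1 ≤ ℓ) : dtChord K t ℓ ≤ Dt K ℓ := by
  have hmem : ∀ {n : ℕ}, 1 ≤ n → (n : ℝ) ∈ Set.Ioi 0 := fun hn => by
    simp only [Set.mem_Ioi]; exact_mod_cast hn
  have hout : (ℓ : ℝ) ∉ Set.Ioo (t : ℝ) ((t + 1 : ℕ) : ℝ) := by
    rintro ⟨h₁, h₂⟩; norm_cast at h₁ h₂; omega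
  simp only [dtChord, Dt_eq_sum_zpow, ← sum_sub_distrib, mul_sum, ← sum_add_distrib]
  refine sum_le_sum fun i _ => ?_
  have h := (convexOn_zpow (𝕜 := ℝ) (-(i : ℤ))).secant_le_of_notMem_Ioo (hmem ht)
    (hmem (Nat.le_succ_of_le ht)) (hmem hℓ) (by norm_num) hout
  push_cast at h
  simpa using h

lemma Dt_succ_le (K : ℕ) {t : ℕ} (ht : 1 ≤ t) : Dt K (t + 1) ≤ Dt K t := by
  refine sum_le_sum fun i _ => pow_le_pow_left₀ (by positivity) ?_ i
  have : (0 : ℝ) < t := by exact_mod_cast ht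
  gcongr
  exact_mod_cast Nat.le_succ t

lemma dtChord_antitone (K : ℕ) {t : ℕ} (ht : 1 ≤ t) : Antitone (dtChord K t) := fun x y hxy => by
  have := Dt_succ_le K ht
  unfold dtChord; nlinarith

lemma dtChord_natCast_self (K t : ℕ) : dtChord K t t = Dt K t := by simp [dtChord]

lemma dtChord_natCast_succ (K t : ℕ) : dtChord K t (t + 1 : ℕ) = Dt K (t + 1) := by
  simp [dtChord]

section Placement

variable {ι : Type*} [Fintype ι]

noncomputable def fractionalCoords (m : ι → ℝ) : Finset ι := {n | m n ∈ Set.Ioo 0 1}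

lemma binary_of_fractionalCoords {m : ι → ℝ} (hm : ∀ n, m n ∈ Set.Icc 0 1) {n : ι}
    (hn : n ∉ fractionalCoords m) : m n = 0 ∨ m n = 1 := by
  simp only [fractionalCoords, mem_filter, mem_univ, true_and, Set.mem_Ioo, not_and_or,
    not_lt] at hn
  have := hm n
  rcases hn with h | h
  · exact Or.inl (le_antisymm h this.1)
  · exact Or.inr (le_antisymm this.2 h)

lemma card_fractionalCoords_lt {m p : ι → ℝ} (hp : ∀ n ∉ fractionalCoords m, p n = m n)
    {c : ι} (hc : c ∈ fractionalCoords m) (hpc : p c ∉ Set.Ioo 0 1) :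
    #(fractionalCoords p) < #(fractionalCoords m) := by
  refine card_lt_card ((ssubset_iff_of_subset fun n hn => ?_).2 ⟨c, hc, ?_⟩)
  · by_contra h
    simp only [fractionalCoords, mem_filter, mem_univ, true_and] at hn
    exact h (by simpa [fractionalCoords, hp n h] using hn)
  · simpa [fractionalCoords] using hpc

variable [DecidableEq ι]

structure IsTwoLevelPlacement (t : ℕ) (m : ι → ℝ) (α : Finset ι → ℝ) : Prop where
  nonneg : ∀ S, 0 ≤ α S
  card_mem : ∀ S, α S ≠ 0 → S.card = t ∨ S.card = t + 1
  sum_eq_one : ∑ S, α S = 1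
  marginal : ∀ n, ∑ S with n ∈ S, α S = m n

lemma sum_mul_card_eq_sum_sum_mem (α : Finset ι → ℝ) :
    ∑ S, α S * S.card = ∑ n, ∑ S with n ∈ S, α S := by
  simp only [sum_filter]
  rw [sum_comm]
  refine sum_congr rfl fun S _ => ?_
  rw [← sum_filter, filter_mem_eq_inter, univ_inter, sum_const, nsmul_eq_mul, mul_comm]

lemma convex_setOf_exists_isTwoLevelPlacement (t : ℕ) :
    Convex ℝ {m : ι → ℝ | ∃ α, IsTwoLevelPlacement t m α} := by
  rintro m ⟨α, hα⟩ m' ⟨α', hα'⟩ a b ha hb hab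
  refine ⟨a • α + b • α', ⟨fun S => ?_, fun S hS => ?_, ?_, fun n => ?_⟩⟩
  · have := hα.nonneg S; have := hα'.nonneg S
    simp only [Pi.add_apply, Pi.smul_apply, smul_eq_mul]; positivity
  · by_contra! h
    apply hS
    simp only [Pi.add_apply, Pi.smul_apply, smul_eq_mul]
    rw [not_imp_comm.1 (hα.card_mem S) (by tauto), not_imp_comm.1 (hα'.card_mem S) (by tauto)]
    ring
  · simp only [Pi.add_apply, Pi.smul_apply, smul_eq_mul, sum_add_distrib, ← mul_sum,
      hα.sum_eq_one, hα'.sum_eq_one, hab, mul_one]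
  · simp only [Pi.add_apply, Pi.smul_apply, smul_eq_mul, sum_add_distrib, ← mul_sum,
      hα.marginal, hα'.marginal]

lemma isTwoLevelPlacement_single {t : ℕ} {S₀ : Finset ι} (h : S₀.card = t ∨ S₀.card = t + 1) :
    IsTwoLevelPlacement t (fun n => if n ∈ S₀ then 1 else 0) (Pi.single S₀ 1) := by
  refine ⟨(Pi.single_nonneg.2 zero_le_one : (0 : Finset ι → ℝ) ≤ _), fun S hS => ?_, by simp,
    fun n => ?_⟩
  · by_cases hS' : S = S₀
    · exact hS' ▸ h
    · simp [hS'] at hS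
  · simp [Pi.single_apply, sum_ite_eq']

/-- A `0/1` vector has an integral sum, so these bounds say that the sum is `t` or `t + 1`. -/
lemma exists_placement_of_binary {t : ℕ} {m : ι → ℝ} (hm : ∀ n, m n = 0 ∨ m n = 1)
    (hlo : (t : ℝ) < ∑ n, m n + 1) (hhi : ∑ n, m n < t + 2) : ∃ α, IsTwoLevelPlacement t m α := by
  set S₀ : Finset ι := {n | m n = 1}
  have hm_eq : m = fun n => if n ∈ S₀ then 1 else 0 := by
    funext n
    rcases hm n with h | h <;> simp [S₀, h]
  rw [hm_eq, sum_boole, filter_mem_eq_inter, univ_inter] at hlo hhi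
  norm_cast at hlo hhi
  exact ⟨_, hm_eq ▸ isTwoLevelPlacement_single (by omega)⟩

lemma sum_add_smul_single_sub_single (m : ι → ℝ) (ε : ℝ) (i j : ι) :
    ∑ n, (m + ε • (Pi.single i 1 - Pi.single j 1) : ι → ℝ) n = ∑ n, m n := by
  simp [sum_add_distrib, ← mul_sum, sum_sub_distrib]

lemma exists_shift_card_fractionalCoords_lt {m : ι → ℝ} (hm : ∀ n, m n ∈ Set.Icc 0 1) {i j : ι}
    (hij : i ≠ j) (hi : i ∈ fractionalCoords m) (hj : j ∈ fractionalCoords m) :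
    ∃ ε : ℝ, 0 < ε ∧ (∀ n, (m + ε • (Pi.single i 1 - Pi.single j 1) : ι → ℝ) n ∈ Set.Icc 0 1) ∧
      #(fractionalCoords (m + ε • (Pi.single i 1 - Pi.single j 1))) < #(fractionalCoords m) := by
  simp only [fractionalCoords, mem_filter, mem_univ, true_and, Set.mem_Ioo] at hi hj
  obtain ⟨ε, hε_eq⟩ : ∃ ε, ε = min (1 - m i) (m j) := ⟨_, rfl⟩
  set p : ι → ℝ := m + ε • (Pi.single i 1 - Pi.single j 1)
  have hpi : p i = m i + ε := by simp [p, hij]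
  have hpj : p j = m j - ε := by simp [p, hij.symm]; ring
  have hp : ∀ n, n ≠ i → n ≠ j → p n = m n := fun n hni hnj => by simp [p, hni, hnj]
  have hε : 0 < ε := hε_eq ▸ lt_min (by linarith) hj.1
  have hε₁ : ε ≤ 1 - m i := hε_eq ▸ min_le_left _ _
  have hε₂ : ε ≤ m j := hε_eq ▸ min_le_right _ _
  refine ⟨ε, hε, fun n => show p n ∈ _ from ?_, show #(fractionalCoords p) < _ from ?_⟩
  · by_cases hni : n = i
    · subst hni; rw [hpi]; constructor <;> linarith
    by_cases hnj : n = j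
    · subst hnj; rw [hpj]; constructor <;> linarith
    · rw [hp n hni hnj]; exact hm n
  · have hout : ∀ n ∉ fractionalCoords m, p n = m n := fun n hn =>
      hp n (by rintro rfl; simp_all [fractionalCoords]) (by rintro rfl; simp_all [fractionalCoords])
    rcases hε_eq ▸ min_choice (1 - m i) (m j) with h | h
    · exact card_fractionalCoords_lt hout (c := i) (by simp [fractionalCoords, hi])
        (show p i ∉ _ by rw [hpi, h]; simp)
    · exact card_fractionalCoords_lt hout (c := j) (by simp [fractionalCoords, hj])
        (show p j ∉ _ by rw [hpj, h]; simp)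

theorem exists_isTwoLevelPlacement {t : ℕ} {m : ι → ℝ} (hm : ∀ n, m n ∈ Set.Icc 0 1)
    (hlo : (t : ℝ) ≤ ∑ n, m n) (hhi : ∑ n, m n ≤ t + 1) : ∃ α, IsTwoLevelPlacement t m α := by
  have hC := convex_setOf_exists_isTwoLevelPlacement (ι := ι) t
  induction hk : #(fractionalCoords m) using Nat.strong_induction_on generalizing m with
  | _ k ih =>
  rcases (fractionalCoords m).eq_empty_or_nonempty with h₀ | ⟨i, hi⟩
  · exact exists_placement_of_binary
      (fun n => binary_of_fractionalCoords hm (h₀ ▸ notMem_empty n)) (by linarith) (by linarith)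
  by_cases hj : ∃ j ∈ fractionalCoords m, j ≠ i
  · obtain ⟨j, hj, hji⟩ := hj
    obtain ⟨ε₁, hε₁, hp, hpk⟩ := exists_shift_card_fractionalCoords_lt hm hji.symm hi hj
    obtain ⟨ε₂, hε₂, hq, hqk⟩ := exists_shift_card_fractionalCoords_lt hm hji hj hi
    have hq_eq : m - ε₂ • (Pi.single i 1 - Pi.single j 1) =
        m + ε₂ • (Pi.single j 1 - Pi.single i 1) := by
      module
    refine hC.mem_of_add_smul_mem_of_sub_smul_mem hε₁ hε₂ (ih _ (hk ▸ hpk) hp ?_ ?_ rfl) ?_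
    · rwa [sum_add_smul_single_sub_single]
    · rwa [sum_add_smul_single_sub_single]
    · rw [hq_eq]
      exact ih _ (hk ▸ hqk) hq (by rwa [sum_add_smul_single_sub_single])
        (by rwa [sum_add_smul_single_sub_single]) rfl
  -- Only `m i` is fractional: `m` is a mixture of its roundings at `i`, whose sums are
  -- `t + 1` and `t` because `∑ m - m i` is an integer.
  push Not at hj
  have hbin : ∀ n ≠ i, m n = 0 ∨ m n = 1 := fun n hn =>
    binary_of_fractionalCoords hm fun h => hn (hj n h)
  simp only [fractionalCoords, mem_filter, mem_univ, true_and, Set.mem_Ioo] at hi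
  have hp : ∀ n, (m + (1 - m i) • Pi.single i 1 : ι → ℝ) n = 0 ∨
      (m + (1 - m i) • Pi.single i 1 : ι → ℝ) n = 1 := fun n => by
    by_cases hn : n = i
    · subst hn; simp
    · simpa [hn] using hbin n hn
  have hq : ∀ n, (m - m i • Pi.single i 1 : ι → ℝ) n = 0 ∨
      (m - m i • Pi.single i 1 : ι → ℝ) n = 1 := fun n => by
    by_cases hn : n = i
    · subst hn; simp
    · simpa [hn] using hbin n hn
  refine hC.mem_of_add_smul_mem_of_sub_smul_mem (sub_pos.2 hi.2) hi.1
    (exists_placement_of_binary hp ?_ ?_) (exists_placement_of_binary hq ?_ ?_) <;>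
  · simp only [Pi.add_apply, Pi.sub_apply, Pi.smul_apply, smul_eq_mul, sum_add_distrib,
      sum_sub_distrib, ← mul_sum, sum_pi_single', mem_univ, if_true, mul_one]
    linarith

end Placement

lemma sum_mul_dtChord {β : Type*} (K t : ℕ) {A : Finset β} {w x : β → ℝ}
    (hw : ∑ a ∈ A, w a = 1) :
    ∑ a ∈ A, w a * dtChord K t (x a) = dtChord K t (∑ a ∈ A, w a * x a) := by
  simp only [dtChord, mul_add, sub_mul, mul_sub, sum_add_distrib, sum_sub_distrib, ← mul_assoc,
    ← sum_mul, hw]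
  ring

section PlacementLP

variable {N : ℕ}

lemma sum_filter_nonempty_eq_sum {f : Finset (Fin N) → ℝ} (hf : f ∅ = 0) :
    ∑ S ∈ univ.filter (fun S : Finset (Fin N) => S.Nonempty), f S = ∑ S, f S :=
  sum_filter_of_ne fun _ _ hS => nonempty_iff_ne_empty.2 fun h => hS (h ▸ hf)

lemma dtChord_le_PObj (K : ℕ) {t : ℕ} (ht : 1 ≤ t) {m : Fin N → ℝ} {α : Finset (Fin N) → ℝ}
    (hα : PFeasible m α) : dtChord K t (∑ n, m n) ≤ PObj N K α := by
  obtain ⟨hα₀, hα₁, hαm⟩ := hα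
  have hcard : ∑ S ∈ univ.filter (fun S : Finset (Fin N) => S.Nonempty), α S * S.card ≤
      ∑ n, m n := by
    rw [sum_filter_nonempty_eq_sum (by simp), sum_mul_card_eq_sum_sum_mem]
    exact sum_le_sum fun n _ => hαm n
  calc dtChord K t (∑ n, m n)
      ≤ dtChord K t (∑ S ∈ univ.filter (fun S : Finset (Fin N) => S.Nonempty),
          α S * S.card) := dtChord_antitone K ht hcard
    _ = ∑ S ∈ univ.filter (fun S : Finset (Fin N) => S.Nonempty), α S * dtChord K t S.card :=
        (sum_mul_dtChord K t hα₁).symm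
    _ ≤ PObj N K α := sum_le_sum fun S hS => by
        have hS : S.Nonempty := (mem_filter.1 hS).2
        exact mul_le_mul_of_nonneg_left (dtChord_le_Dt K ht (card_pos.2 hS)) (hα₀ S hS)

namespace IsTwoLevelPlacement

variable {t : ℕ} {m : Fin N → ℝ} {α : Finset (Fin N) → ℝ}

lemma apply_empty (hα : IsTwoLevelPlacement t m α) (ht : 1 ≤ t) : α ∅ = 0 := by
  by_contra h
  have := hα.card_mem ∅ h
  simp at this; omega

lemma pFeasible (hα : IsTwoLevelPlacement t m α) (ht : 1 ≤ t) : PFeasible m α :=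
  ⟨fun S _ => hα.nonneg S, by rw [sum_filter_nonempty_eq_sum (hα.apply_empty ht), hα.sum_eq_one],
    fun n => (hα.marginal n).le⟩

lemma PObj_eq (K : ℕ) (hα : IsTwoLevelPlacement t m α) (ht : 1 ≤ t) :
    PObj N K α = dtChord K t (∑ n, m n) := by
  have hchord : ∀ S, α S * Dt K S.card = α S * dtChord K t S.card := fun S => by
    by_cases hS : α S = 0
    · simp [hS]
    rcases hα.card_mem S hS with h | h
    · rw [h, dtChord_natCast_self]
    · rw [h, dtChord_natCast_succ]
  rw [PObj, sum_filter_nonempty_eq_sum (by simp [hα.apply_empty ht]),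
    sum_congr rfl fun S _ => hchord S, sum_mul_dtChord K t hα.sum_eq_one,
    sum_mul_card_eq_sum_sum_mem]
  simp only [hα.marginal]

end IsTwoLevelPlacement

theorem Dstar_eq_dtChord (K : ℕ) {m : Fin N → ℝ} (hm : ∀ n, m n ∈ Set.Icc 0 1)
    (hge : 1 ≤ ∑ n, m n) : Dstar N K m = dtChord K ⌊∑ n, m n⌋₊ (∑ n, m n) := by
  set t := ⌊∑ n, m n⌋₊
  have ht : 1 ≤ t := Nat.le_floor (by simpa using hge)
  obtain ⟨α, hα⟩ := exists_isTwoLevelPlacement hm (Nat.floor_le (by linarith))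
    (Nat.lt_floor_add_one _).le
  exact IsLeast.csInf_eq ⟨⟨α, hα.pFeasible ht, hα.PObj_eq K ht⟩,
    fun d ⟨β, hβ, hd⟩ => hd ▸ dtChord_le_PObj K ht hβ⟩

end PlacementLP

theorem hetero_eq_homo_general (N K : ℕ) (hN : 1 ≤ N)
    (m m' : Fin N → ℝ)
    (hm : ∀ n, 0 ≤ m n ∧ m n ≤ 1) (hm' : ∀ n, 0 ≤ m' n ∧ m' n ≤ 1)
    (hsum : ∑ n, m n = ∑ n, m' n) (hge : 1 ≤ ∑ n, m n) :
    Dstar N K m = Dstar N K m' ∧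
    Dstar N K m = Dstar N K (fun _ => (∑ k, m k) / N) := by
  have hN₀ : (0 : ℝ) < N := by exact_mod_cast hN
  have hmean_sum : ∑ _n : Fin N, (∑ k, m k) / N = ∑ k, m k := by
    rw [sum_const, card_univ, Fintype.card_fin, nsmul_eq_mul]
    field_simp
  have hmean : ∀ n : Fin N, (∑ k, m k) / N ∈ Set.Icc 0 1 := fun _ =>
    ⟨by positivity, (div_le_one hN₀).2
      ((sum_le_sum fun n _ => (hm n).2).trans (by simp))⟩
  rw [Dstar_eq_dtChord K hmean (by rwa [hmean_sum]), hmean_sum, Dstar_eq_dtChord K hm hge,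
    Dstar_eq_dtChord K hm' (hsum ▸ hge), hsum]
  exact ⟨rfl, rfl⟩

theorem hetero_eq_homo (N K : ℕ) (hN : 1 ≤ N) (hK : 1 ≤ K)
    (m m' : Fin N → ℝ)
    (hm : ∀ n, 0 ≤ m n ∧ m n ≤ 1) (hm' : ∀ n, 0 ≤ m' n ∧ m' n ≤ 1)
    (hsum : ∑ n, m n = ∑ n, m' n) (hge : 1 ≤ ∑ n, m n) :
    Dstar N K m = Dstar N K m' ∧
    Dstar N K m = Dstar N K (fun _ => (∑ k, m k) / N) :=
  hetero_eq_homo_general N K hN m m' hm hm' hsum hge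
end

section
/- Let N ≥ 1, K ≥ 2, and let m_s be a real number with m_s ≥ 1. If β is an optimal solution of the relaxed linear program R(m_s), then there does not exist a set 𝒩 ⊆ {1, …, N} with |𝒩| ≥ 3 and β_n > 0 for all n ∈ 𝒩; that is, the set {n : β_n > 0} has at most two elements. -/
/-!
For `K ≥ 2` the map `x ↦ ∑_{i<K} x⁻ⁱ` is strictly convex on `(0, ∞)`, since its `i = 1` term
is. If an optimal `β` had three positive entries at positions `a < b < c`, shifting mass from
`a` and `c` to `b` in the ratio `(c - b) : (b - a)` keeps both constraints unchanged, and by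
strict convexity it strictly lowers the objective.
-/

open Finset

/-- Feasibility for the relaxed linear program `R(m_s)`: `β = (β_1,…,β_N)` (here `β n`
stands for `β_{n+1}`) is nonnegative, sums to `1`, and satisfies `∑ n·β_n ≤ m_s`. -/
def RFeasible (N : ℕ) (ms : ℝ) (β : Fin N → ℝ) : Prop :=
  (∀ n, 0 ≤ β n) ∧ (∑ n, β n) = 1 ∧
  (∑ n : Fin N, ((n : ℕ) + 1 : ℝ) * β n) ≤ ms

/-- Objective value of the relaxed LP: `∑_{n=1}^N β_n · D̃_n`. -/
noncomputable def RObj (N K : ℕ) (β : Fin N → ℝ) : ℝ :=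
  ∑ n : Fin N, β n * Dt K ((n : ℕ) + 1)

open Set Filter Topology

lemma Finset.exists_lt_lt_of_two_lt_card {α : Type*} [LinearOrder α] {s : Finset α}
    (hs : 2 < #s) : ∃ a ∈ s, ∃ b ∈ s, ∃ c ∈ s, a < b ∧ b < c := by
  let f := s.orderEmbOfFin rfl
  exact ⟨f ⟨0, by omega⟩, s.orderEmbOfFin_mem rfl _, f ⟨1, hs.trans' one_lt_two⟩,
    s.orderEmbOfFin_mem rfl _, f ⟨2, hs⟩, s.orderEmbOfFin_mem rfl _,
    f.strictMono (Fin.mk_lt_mk.2 zero_lt_one), f.strictMono (Fin.mk_lt_mk.2 one_lt_two)⟩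

lemma StrictConvexOn.mul_lt_add_mul {s : Set ℝ} {f : ℝ → ℝ} (hf : StrictConvexOn ℝ s f)
    {a b c : ℝ} (ha : a ∈ s) (hc : c ∈ s) (hab : a < b) (hbc : b < c) :
    (c - a) * f b < (c - b) * f a + (b - a) * f c := by
  have h := hf.slope_strict_mono_adjacent ha hc hab hbc
  rw [div_lt_div_iff₀ (sub_pos.2 hab) (sub_pos.2 hbc)] at h
  nlinarith

lemma exists_pos_forall_nonneg_add_mul {ι : Type*} [Finite ι] {β v : ι → ℝ}
    (hβ : ∀ n, 0 ≤ β n) (hv : ∀ n, v n < 0 → 0 < β n) :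
    ∃ ε : ℝ, 0 < ε ∧ ∀ n, 0 ≤ β n + ε * v n := by
  suffices ∀ᶠ ε in 𝓝[>] (0 : ℝ), ∀ n, 0 ≤ β n + ε * v n by
    obtain ⟨ε, hε, hεpos⟩ := (this.and self_mem_nhdsWithin).exists
    exact ⟨ε, hεpos, hε⟩
  refine eventually_all.2 fun n => ?_
  rcases (hβ n).eq_or_lt with h0 | hpos
  · filter_upwards [self_mem_nhdsWithin] with ε (hε : 0 < ε)
    have : 0 ≤ v n := not_lt.1 fun h => (hv n h).ne' h0.symm
    rw [← h0, zero_add]; positivity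
  · have : Tendsto (fun ε => β n + ε * v n) (𝓝 0) (𝓝 (β n)) :=
      (continuous_const.add (continuous_id.mul continuous_const)).tendsto' _ _ (by simp)
    exact nhdsWithin_le_nhds ((this.eventually (lt_mem_nhds hpos)).mono fun _ h => h.le)

lemma exists_nonneg_same_moments_lt_of_three_pos {ι : Type*} [Fintype ι] [DecidableEq ι]
    {p g β : ι → ℝ} {i j k : ι} (hij : p i < p j) (hjk : p j < p k)
    (hg : (p k - p i) * g j < (p k - p j) * g i + (p j - p i) * g k)
    (hβ : ∀ n, 0 ≤ β n) (hi : 0 < β i) (hk : 0 < β k) :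
    ∃ β' : ι → ℝ, (∀ n, 0 ≤ β' n) ∧ ∑ n, β' n = ∑ n, β n ∧
      ∑ n, p n * β' n = ∑ n, p n * β n ∧ ∑ n, β' n * g n < ∑ n, β n * g n := by
  set v : ι → ℝ := Pi.single i (p j - p k) + Pi.single j (p k - p i) + Pi.single k (p i - p j)
  have hv_sum (w : ι → ℝ) :
      ∑ n, w n * v n = w i * (p j - p k) + w j * (p k - p i) + w k * (p i - p j) := by
    simp [v, mul_add, sum_add_distrib, Pi.single_apply]
  have hv_neg (n : ι) (hn : v n < 0) : 0 < β n := by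
    have hji : j ≠ i := (hij.ne' <| congrArg p ·)
    have hjk' : j ≠ k := (hjk.ne <| congrArg p ·)
    by_cases hni : n = i
    · exact hni ▸ hi
    by_cases hnk : n = k
    · exact hnk ▸ hk
    refine absurd hn (not_lt.2 ?_)
    by_cases hnj : n = j
    · subst hnj; simp [v, hji, hjk', hij.trans hjk |>.le]
    · simp [v, hni, hnj, hnk]
  have hv_mass : ∑ n, v n = 0 := by
    simpa using (hv_sum 1).trans (by simp only [Pi.one_apply]; ring)
  have hv_mean : ∑ n, p n * v n = 0 := by rw [hv_sum]; ring
  have hv_obj : ∑ n, g n * v n < 0 := by rw [hv_sum]; linarith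
  obtain ⟨ε, hε, hβ'⟩ := exists_pos_forall_nonneg_add_mul hβ hv_neg
  refine ⟨fun n => β n + ε * v n, hβ', ?_, ?_, ?_⟩
  · simp [sum_add_distrib, ← mul_sum, hv_mass]
  · simp [mul_add, sum_add_distrib, mul_left_comm _ ε, ← mul_sum, hv_mean]
  · simp only [add_mul, sum_add_distrib, mul_assoc, ← mul_sum, mul_comm (v _)]
    nlinarith

lemma one_div_pow_eq_zpow_neg (x : ℝ) (i : ℕ) : (1 / x) ^ i = x ^ (-(i : ℤ)) := by
  rw [zpow_neg, zpow_natCast, one_div, inv_pow]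

lemma strictConvexOn_sum_range_one_div_pow {K : ℕ} (hK : 2 ≤ K) :
    StrictConvexOn ℝ (Ioi 0) fun x : ℝ => ∑ i ∈ range K, (1 / x) ^ i := by
  simp_rw [one_div_pow_eq_zpow_neg]
  induction K, hK using Nat.le_induction with
  | base =>
    have h := (strictConvexOn_zpow (m := -1) (by norm_num) (by norm_num)).add_const (1 : ℝ)
    rwa [show ((fun x : ℝ => x ^ (-1 : ℤ)) + fun _ => 1) = fun x => ∑ i ∈ range 2, x ^ (-(i : ℤ))
      from funext fun x => by simp [sum_range_succ, add_comm]] at h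
  | succ K _ ih =>
    simp only [sum_range_succ]
    exact ih.add_convexOn (convexOn_zpow _)

lemma sub_mul_Dt_lt {K a b c : ℕ} (hK : 2 ≤ K) (ha : 0 < a) (hab : a < b) (hbc : b < c) :
    ((c : ℝ) - a) * Dt K b < (c - b) * Dt K a + (b - a) * Dt K c :=
  (strictConvexOn_sum_range_one_div_pow hK).mul_lt_add_mul (by simpa using ha)
    (by simpa using ha.trans (hab.trans hbc)) (by exact_mod_cast hab) (by exact_mod_cast hbc)

theorem at_most_two_positive_general (N K : ℕ) (hK : 2 ≤ K)
    (ms : ℝ)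
    (β : Fin N → ℝ) (hfeas : RFeasible N ms β)
    (hopt : ∀ β' : Fin N → ℝ, RFeasible N ms β' → RObj N K β ≤ RObj N K β') :
    (¬ ∃ 𝒩 : Finset (Fin N), 3 ≤ 𝒩.card ∧ ∀ n ∈ 𝒩, 0 < β n) ∧
    (Finset.univ.filter (fun n : Fin N => 0 < β n)).card ≤ 2 := by
  obtain ⟨hβ, hmass, hmean⟩ := hfeas
  have hno3 : ¬ ∃ 𝒩 : Finset (Fin N), 3 ≤ 𝒩.card ∧ ∀ n ∈ 𝒩, 0 < β n := by
    rintro ⟨𝒩, h3, hpos⟩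
    obtain ⟨i, hi, j, -, k, hk, hij, hjk⟩ := 𝒩.exists_lt_lt_of_two_lt_card h3
    have hconv := sub_mul_Dt_lt hK (Nat.succ_pos i) (Nat.succ_lt_succ hij) (Nat.succ_lt_succ hjk)
    push_cast at hconv
    obtain ⟨β', hβ', hmass', hmean', hlt⟩ := exists_nonneg_same_moments_lt_of_three_pos
      (p := fun n : Fin N => ((n : ℕ) + 1 : ℝ)) (g := fun n : Fin N => Dt K ((n : ℕ) + 1))
      (by simpa using hij) (by simpa using hjk) hconv hβ (hpos i hi) (hpos k hk)
    refine (hopt β' ⟨hβ', hmass' ▸ hmass, hmean' ▸ hmean⟩).not_gt ?_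
    simpa only [RObj, mul_comm] using hlt
  exact ⟨hno3, not_lt.1 fun h => hno3 ⟨_, h, fun n hn => (mem_filter.1 hn).2⟩⟩

theorem at_most_two_positive (N K : ℕ) (hN : 1 ≤ N) (hK : 2 ≤ K)
    (ms : ℝ) (hms : 1 ≤ ms)
    (β : Fin N → ℝ) (hfeas : RFeasible N ms β)
    (hopt : ∀ β' : Fin N → ℝ, RFeasible N ms β' → RObj N K β ≤ RObj N K β') :
    (¬ ∃ 𝒩 : Finset (Fin N), 3 ≤ 𝒩.card ∧ ∀ n ∈ 𝒩, 0 < β n) ∧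
    (Finset.univ.filter (fun n : Fin N => 0 < β n)).card ≤ 2 :=
  at_most_two_positive_general N K hK ms β hfeas hopt
end

section
/- Let N ≥ 1, K ≥ 2, and let m_s be a real number with m_s ≥ 1. If β is an optimal solution of the relaxed linear program R(m_s) and n_1 < n_2 are indices in {1, …, N} with β_{n_1} > 0 and β_{n_2} > 0, then n_2 = n_1 + 1. -/
open Finset

/-!
The costs `D̃_ℓ` are the values at integers of `x ↦ ∑_{i<K} x⁻ⁱ`, which is strictly convex on
`(0, ∞)` as soon as `K ≥ 2` (the term `x⁻¹` is). So the increments `D̃_{n+1} - D̃_n` strictly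
increase. If an optimal `β` charged `n₁` and `n₂` with `n₁ + 1 < n₂`, moving the mass
`ε = min β_{n₁} β_{n₂}` from both of them inward to `n₁ + 1` and `n₂ - 1` keeps `∑ β_n` and
`∑ n β_n` unchanged and changes the objective by
`ε ((D̃_{n₁+1} - D̃_{n₁}) - (D̃_{n₂} - D̃_{n₂-1})) < 0`.
-/

theorem convexOn_finset_sum {𝕜 E β ι : Type*} [Semiring 𝕜] [PartialOrder 𝕜] [AddCommMonoid E]
    [AddCommMonoid β] [PartialOrder β] [IsOrderedAddMonoid β] [SMul 𝕜 E] [Module 𝕜 β]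
    {s : Set E} (hs : Convex 𝕜 s) (t : Finset ι) {f : ι → E → β}
    (hf : ∀ i ∈ t, ConvexOn 𝕜 s (f i)) : ConvexOn 𝕜 s fun x => ∑ i ∈ t, f i x := by
  classical
  induction t using Finset.induction_on with
  | empty => simpa using convexOn_const 0 hs
  | insert a t ha ih =>
    simp only [sum_insert ha]
    exact (hf a (mem_insert_self a t)).add (ih fun i hi => hf i (mem_insert_of_mem hi))

theorem convexOn_one_div_pow (i : ℕ) : ConvexOn ℝ (Set.Ioi 0) fun x : ℝ => (1 / x) ^ i := by
  simpa [one_div, inv_pow, ← zpow_natCast, ← zpow_neg] using convexOn_zpow (-(i : ℤ))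

theorem strictConvexOn_Dt {K : ℕ} (hK : 2 ≤ K) :
    StrictConvexOn ℝ (Set.Ioi 0) fun x : ℝ => ∑ i ∈ range K, (1 / x) ^ i := by
  have h1 : 1 ∈ range K := mem_range.2 hK
  simp only [← add_sum_erase _ _ h1, pow_one]
  have h_inv : StrictConvexOn ℝ (Set.Ioi 0) fun x : ℝ => 1 / x := by
    simpa [one_div] using strictConvexOn_zpow (m := -1) (by norm_num) (by norm_num)
  exact h_inv.add_convexOn (convexOn_finset_sum (convex_Ioi 0) _ fun i _ => convexOn_one_div_pow i)

theorem StrictConvexOn.strictMono_sub_succ {f : ℝ → ℝ} (hf : StrictConvexOn ℝ (Set.Ioi 0) f) :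
    StrictMono fun n : ℕ => f (n + 2) - f (n + 1) := by
  refine strictMono_nat_of_lt_succ fun n => ?_
  have := hf.slope_strict_mono_adjacent (x := n + 1) (y := n + 2) (z := n + 3)
    (Set.mem_Ioi.2 (by positivity)) (Set.mem_Ioi.2 (by positivity)) (by linarith) (by linarith)
  push_cast
  convert this using 1 <;> ring_nf

theorem strictMono_Dt_sub_succ {K : ℕ} (hK : 2 ≤ K) :
    StrictMono fun n : ℕ => Dt K (n + 2) - Dt K (n + 1) := by
  simpa [Dt] using (strictConvexOn_Dt hK).strictMono_sub_succ

section Transfer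

variable {N : ℕ} (i j a b : Fin N)

def transfer : Fin N → ℝ :=
  Pi.single a 1 + Pi.single b 1 - Pi.single i 1 - Pi.single j 1

theorem sum_transfer_mul (g : Fin N → ℝ) :
    ∑ n, transfer i j a b n * g n = g a + g b - g i - g j := by
  simp [transfer, add_mul, sub_mul, sum_add_distrib, sum_sub_distrib, Pi.single_apply, ite_mul]

theorem sum_add_smul_transfer_mul (β g : Fin N → ℝ) (ε : ℝ) :
    ∑ n, (β + ε • transfer i j a b) n * g n
      = ∑ n, β n * g n + ε * (g a + g b - g i - g j) := by
  simp only [Pi.add_apply, Pi.smul_apply, smul_eq_mul, add_mul, mul_assoc, sum_add_distrib,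
    ← mul_sum, sum_transfer_mul]

variable {i j a b}

theorem add_smul_transfer_nonneg {β : Fin N → ℝ} (hβ : ∀ n, 0 ≤ β n) (hij : i ≠ j) {ε : ℝ}
    (hε : 0 ≤ ε) (hεi : ε ≤ β i) (hεj : ε ≤ β j) (n : Fin N) :
    0 ≤ (β + ε • transfer i j a b) n := by
  have := hβ n
  simp only [transfer, Pi.add_apply, Pi.smul_apply, Pi.sub_apply, Pi.single_apply, smul_eq_mul]
  split_ifs <;> subst_vars <;> first | contradiction | nlinarith

theorem RFeasible.add_smul_transfer {ms : ℝ} {β : Fin N → ℝ} (h : RFeasible N ms β) (hij : i ≠ j)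
    (hab : (a : ℕ) + b = i + j) {ε : ℝ} (hε : 0 ≤ ε) (hεi : ε ≤ β i) (hεj : ε ≤ β j) :
    RFeasible N ms (β + ε • transfer i j a b) := by
  obtain ⟨hβ, hsum, hmoment⟩ := h
  have hab' : ((a : ℕ) + 1 : ℝ) + (b + 1) - (i + 1) - (j + 1) = 0 := by
    have : ((a : ℕ) : ℝ) + b = i + j := mod_cast hab
    linear_combination this
  refine ⟨add_smul_transfer_nonneg hβ hij hε hεi hεj, ?_, ?_⟩
  · simpa [hsum] using sum_add_smul_transfer_mul i j a b β 1 ε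
  · simpa only [mul_comm _ (β _), mul_comm (_ : ℝ) ((β + _) _), sum_add_smul_transfer_mul, hab',
      mul_zero, add_zero] using hmoment

theorem RObj_add_smul_transfer (K : ℕ) (β : Fin N → ℝ) (ε : ℝ) :
    RObj N K (β + ε • transfer i j a b) = RObj N K β
      + ε * (Dt K (a + 1) + Dt K (b + 1) - Dt K (i + 1) - Dt K (j + 1)) :=
  sum_add_smul_transfer_mul i j a b β _ ε

end Transfer

theorem positives_consecutive_general (N K : ℕ) (hK : 2 ≤ K)
    (ms : ℝ)
    (β : Fin N → ℝ) (hfeas : RFeasible N ms β)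
    (hopt : ∀ β' : Fin N → ℝ, RFeasible N ms β' → RObj N K β ≤ RObj N K β')
    (n₁ n₂ : Fin N) (hlt : n₁ < n₂) (h₁ : 0 < β n₁) (h₂ : 0 < β n₂) :
    (n₂ : ℕ) = (n₁ : ℕ) + 1 := by
  by_contra hne
  have hgap : (n₁ : ℕ) + 1 < n₂ := by omega
  let a : Fin N := ⟨n₁ + 1, by omega⟩
  let b : Fin N := ⟨n₂ - 1, by omega⟩
  have hε : 0 < min (β n₁) (β n₂) := lt_min h₁ h₂
  have hfeas' := hfeas.add_smul_transfer (a := a) (b := b) hlt.ne (by simp [a, b]; omega)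
    hε.le (min_le_left _ _) (min_le_right _ _)
  have hdecrease : Dt K (a + 1) + Dt K (b + 1) - Dt K (n₁ + 1) - Dt K (n₂ + 1) < 0 := by
    have := strictMono_Dt_sub_succ hK (show (n₁ : ℕ) < n₂ - 1 by omega)
    simp only [show (n₂ : ℕ) - 1 + 2 = n₂ + 1 by omega] at this
    simp only [a, b]
    linarith
  have := hopt _ hfeas'
  rw [RObj_add_smul_transfer] at this
  linarith [mul_neg_of_pos_of_neg hε hdecrease]

theorem positives_consecutive (N K : ℕ) (hN : 1 ≤ N) (hK : 2 ≤ K)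
    (ms : ℝ) (hms : 1 ≤ ms)
    (β : Fin N → ℝ) (hfeas : RFeasible N ms β)
    (hopt : ∀ β' : Fin N → ℝ, RFeasible N ms β' → RObj N K β ≤ RObj N K β')
    (n₁ n₂ : Fin N) (hlt : n₁ < n₂) (h₁ : 0 < β n₁) (h₂ : 0 < β n₂) :
    (n₂ : ℕ) = (n₁ : ℕ) + 1 :=
  positives_consecutive_general N K hK ms β hfeas hopt n₁ n₂ hlt h₁ h₂
end

section
/- Let K ≥ 2, let N ≥ 2, let j be an integer with 1 ≤ j < N, and let m_s be a real number. The unit vector e_j (the vector with β_j = 1 and β_n = 0 for all n ≠ j) is an optimal solution of the relaxed linear program R(m_s) if and only if m_s = j. -/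
open Finset

/-- The unit vector with `β_j = 1` and `β_n = 0` for `n ≠ j`. -/
def unitVec (N j : ℕ) : Fin N → ℝ := fun n => if (n : ℕ) + 1 = j then 1 else 0

/-!
The objective is `β ↦ ∑ β_n f(n)` with `f(x) = ∑_{i<K} x^{-i}`, which is convex and decreasing
on `(0, ∞)`. By Jensen every feasible `β` costs at least `f(∑ n β_n) ≥ f(m_s)`, and `e_j` costs
`f(j)`; so `e_j` is optimal when `m_s = j`. If `m_s > j`, shifting a little mass from `e_j` to
`e_{j+1}` keeps feasibility and strictly lowers the cost because `f(j+1) < f(j)` once `K ≥ 2`.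
-/

noncomputable def invGeomSum (K : ℕ) (x : ℝ) : ℝ := ∑ i ∈ range K, (1 / x) ^ i

lemma Dt_eq_invGeomSum (K n : ℕ) : Dt K n = invGeomSum K n := rfl

lemma convexOn_invGeomSum (K : ℕ) : ConvexOn ℝ (Set.Ioi 0) (invGeomSum K) := by
  induction K with
  | zero => exact convexOn_const 0 (convex_Ioi 0)
  | succ k ih =>
    have hterm : ConvexOn ℝ (Set.Ioi 0) fun x : ℝ => (1 / x) ^ k := by
      simpa [one_div, zpow_neg, inv_pow] using convexOn_zpow (𝕜 := ℝ) (-(k : ℤ))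
    have hsplit : invGeomSum (k + 1) = invGeomSum k + fun x => (1 / x) ^ k := by
      funext x
      simp [invGeomSum, sum_range_succ]
    rw [hsplit]
    exact ih.add hterm

lemma antitoneOn_invGeomSum (K : ℕ) : AntitoneOn (invGeomSum K) (Set.Ioi 0) := by
  intro x (hx : 0 < x) y _ hxy
  have hy : 0 < y := hx.trans_le hxy
  refine sum_le_sum fun i _ => pow_le_pow_left₀ (by positivity) ?_ i
  exact one_div_le_one_div_of_le hx hxy

lemma strictAntiOn_invGeomSum {K : ℕ} (hK : 2 ≤ K) : StrictAntiOn (invGeomSum K) (Set.Ioi 0) := by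
  intro x (hx : 0 < x) y _ hxy
  have hy : 0 < y := hx.trans hxy
  refine sum_lt_sum (fun i _ => pow_le_pow_left₀ (by positivity) ?_ i) ⟨1, mem_range.2 hK, ?_⟩
  · exact one_div_le_one_div_of_le hx hxy.le
  · simpa using one_div_lt_one_div_of_lt hx hxy

section unitVec

variable {N j : ℕ}

lemma sum_unitVec_mul (hj1 : 1 ≤ j) (hjN : j ≤ N) (g : ℕ → ℝ) :
    ∑ n : Fin N, unitVec N j n * g (n + 1) = g j := by
  have hj : j - 1 + 1 = j := by omega
  rw [sum_eq_single (⟨j - 1, by omega⟩ : Fin N)]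
  · simp [unitVec, hj]
  · intro n _ hn
    have : (n : ℕ) + 1 ≠ j := fun h => hn (Fin.ext (by simp only; omega))
    simp [unitVec, this]
  · simp

lemma RObj_unitVec (K : ℕ) (hj1 : 1 ≤ j) (hjN : j ≤ N) : RObj N K (unitVec N j) = Dt K j :=
  sum_unitVec_mul hj1 hjN (Dt K)

lemma rFeasible_unitVec_iff {ms : ℝ} (hj1 : 1 ≤ j) (hjN : j ≤ N) :
    RFeasible N ms (unitVec N j) ↔ (j : ℝ) ≤ ms := by
  have hsum : ∑ n, unitVec N j n = 1 := by
    simpa using sum_unitVec_mul hj1 hjN fun _ => 1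
  have hmean : ∑ n : Fin N, ((n : ℕ) + 1 : ℝ) * unitVec N j n = j := by
    simpa [mul_comm] using sum_unitVec_mul hj1 hjN Nat.cast
  have hnonneg : ∀ n, 0 ≤ unitVec N j n := fun n => by unfold unitVec; positivity
  simp [RFeasible, hsum, hmean, hnonneg]

end unitVec

lemma invGeomSum_le_RObj {N K : ℕ} {ms : ℝ} {β : Fin N → ℝ} (hβ : RFeasible N ms β) :
    invGeomSum K ms ≤ RObj N K β := by
  obtain ⟨hnonneg, hsum, hmean⟩ := hβ
  have hpts : ∀ n ∈ (univ : Finset (Fin N)), ((n : ℕ) + 1 : ℝ) ∈ Set.Ioi 0 := fun n _ => by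
    simp only [Set.mem_Ioi]; positivity
  have hwts : ∀ n ∈ (univ : Finset (Fin N)), 0 ≤ β n := fun n _ => hnonneg n
  have hcenter := (convex_Ioi (0 : ℝ)).sum_mem hwts hsum hpts
  have hjensen := (convexOn_invGeomSum K).map_sum_le hwts hsum hpts
  simp only [smul_eq_mul] at hcenter hjensen
  rw [sum_congr rfl fun n _ => mul_comm (β n) _] at hcenter hjensen
  calc invGeomSum K ms
      ≤ invGeomSum K (∑ n : Fin N, ((n : ℕ) + 1 : ℝ) * β n) :=
        antitoneOn_invGeomSum K hcenter (lt_of_lt_of_le hcenter hmean) hmean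
    _ ≤ ∑ n : Fin N, β n * invGeomSum K ((n : ℕ) + 1) := hjensen
    _ = RObj N K β := by simp [RObj, Dt_eq_invGeomSum]

lemma exists_rFeasible_RObj_lt {N K j : ℕ} {ms : ℝ} (hK : 2 ≤ K) (hj1 : 1 ≤ j) (hjN : j < N)
    (hms : (j : ℝ) < ms) : ∃ β, RFeasible N ms β ∧ RObj N K β < Dt K j := by
  set t := min (ms - j) 1
  have ht0 : 0 < t := lt_min (by linarith) one_pos
  have ht1 : t ≤ 1 := min_le_right _ _
  have htms : j + t ≤ ms := by linarith [min_le_left (ms - j) 1]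
  set β : Fin N → ℝ := fun n => (1 - t) * unitVec N j n + t * unitVec N (j + 1) n
  have hmix : ∀ g : ℕ → ℝ, ∑ n : Fin N, β n * g (n + 1) = (1 - t) * g j + t * g (j + 1) :=
    fun g => by
      simp only [β, add_mul, mul_assoc, sum_add_distrib, ← mul_sum,
        sum_unitVec_mul hj1 hjN.le, sum_unitVec_mul (Nat.le_succ_of_le hj1) hjN]
  have hnonneg : ∀ n, 0 ≤ β n := fun n => by
    simp only [β, unitVec]; split_ifs <;> linarith
  have hsum : ∑ n, β n = 1 := by simpa using hmix fun _ => 1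
  have hmean : ∑ n : Fin N, ((n : ℕ) + 1 : ℝ) * β n = j + t := by
    simp only [mul_comm _ (β _)]
    have := hmix Nat.cast
    push_cast at this
    rw [this]; ring
  have hdrop : Dt K (j + 1) < Dt K j := by
    simp only [Dt_eq_invGeomSum]
    exact strictAntiOn_invGeomSum hK (Set.mem_Ioi.2 (by positivity))
      (Set.mem_Ioi.2 (by positivity)) (by push_cast; linarith)
  refine ⟨β, ⟨hnonneg, hsum, hmean ▸ htms⟩, ?_⟩
  rw [RObj, hmix (Dt K)]
  nlinarith

theorem unit_optimal_iff_general (N K : ℕ) (hK : 2 ≤ K)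
    (j : ℕ) (hj1 : 1 ≤ j) (hjN : j < N) (ms : ℝ) :
    (RFeasible N ms (unitVec N j) ∧
      ∀ β : Fin N → ℝ, RFeasible N ms β → RObj N K (unitVec N j) ≤ RObj N K β)
    ↔ ms = (j : ℝ) := by
  rw [rFeasible_unitVec_iff hj1 hjN.le, RObj_unitVec K hj1 hjN.le]
  constructor
  · rintro ⟨hjms, hopt⟩
    refine le_antisymm ?_ hjms
    by_contra! hlt
    obtain ⟨β, hβ, hcost⟩ := exists_rFeasible_RObj_lt hK hj1 hjN hlt
    exact (hopt β hβ).not_gt hcost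
  · rintro rfl
    exact ⟨le_rfl, fun β hβ => invGeomSum_le_RObj hβ⟩

theorem unit_optimal_iff (N K : ℕ) (hN : 2 ≤ N) (hK : 2 ≤ K)
    (j : ℕ) (hj1 : 1 ≤ j) (hjN : j < N) (ms : ℝ) :
    (RFeasible N ms (unitVec N j) ∧
      ∀ β : Fin N → ℝ, RFeasible N ms β → RObj N K (unitVec N j) ≤ RObj N K β)
    ↔ ms = (j : ℝ) :=
  unit_optimal_iff_general N K hK j hj1 hjN ms
end

section
/- Let N ≥ 2, let i be an integer with 1 ≤ i ≤ N − 1, and let m = (m_1, …, m_N) satisfy 0 ≤ m_n ≤ 1 for all n and i < m_s < i + 1, where m_s = ∑_{n=1}^N m_n. Let v_1, …, v_N, w_1, w_2 be real numbers such that ∑_{j=1}^N m_j·v_j + (i + 1 − m_s)·w_1 + (m_s − i)·w_2 > 0. Then there exists a subset S ⊆ {1, …, N} such that either |S| = i and ∑_{j ∈ S} v_j + w_1 > 0, or |S| = i + 1 and ∑_{j ∈ S} v_j + w_2 > 0. -/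
/-!
Let `s = ∑ m`. Pick `S` of size `i` with maximal `∑_{S} v` and `j ∉ S` with maximal `v j`; by the
exchange argument `v j` separates `S` from its complement. Since `0 ≤ m ≤ 1`, every coordinate
obeys `m k (v k - v j) ≤ [k ∈ S] (v k - v j)`, whence `∑ m v ≤ ∑_{S} v + (s - i) v j`. The left side
of the hypothesis is therefore at most `(i + 1 - s)(∑_{S} v + w₁) + (s - i)(∑_{insert j S} v + w₂)`,
a combination with nonnegative weights, so one of the two brackets is positive.
-/

open Finset

theorem sum_mul_le_sum_add_mul_of_threshold {ι R : Type*} [Fintype ι] [DecidableEq ι]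
    [CommRing R] [LinearOrder R] [IsStrictOrderedRing R] (x v : ι → R) (hx : ∀ k, 0 ≤ x k ∧ x k ≤ 1)
    (S : Finset ι) (t : R) (hS : ∀ k ∈ S, t ≤ v k) (hSc : ∀ k ∉ S, v k ≤ t) :
    ∑ k, x k * v k ≤ ∑ k ∈ S, v k + (∑ k, x k - #S) * t := by
  have hpoint : ∀ k, x k * (v k - t) ≤ if k ∈ S then v k - t else 0 := by
    intro k
    split_ifs with hk
    · exact mul_le_of_le_one_left (sub_nonneg.2 (hS k hk)) (hx k).2
    · exact mul_nonpos_of_nonneg_of_nonpos (hx k).1 (sub_nonpos.2 (hSc k hk))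
  calc ∑ k, x k * v k = ∑ k, x k * (v k - t) + (∑ k, x k) * t := by
        simp only [mul_sub, sum_sub_distrib, sum_mul, sub_add_cancel]
    _ ≤ ∑ k, (if k ∈ S then v k - t else 0) + (∑ k, x k) * t := by
        gcongr with k; exact hpoint k
    _ = ∑ k ∈ S, v k + (∑ k, x k - #S) * t := by
        rw [sum_ite_mem, univ_inter, sum_sub_distrib, sum_const, nsmul_eq_mul]; ring

theorem exists_card_eq_threshold_notMem {ι α : Type*} [Fintype ι] [DecidableEq ι]
    [AddCommGroup α] [LinearOrder α] [IsOrderedAddMonoid α] (v : ι → α) {i : ℕ}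
    (hi : i < Fintype.card ι) :
    ∃ S : Finset ι, #S = i ∧ ∃ j ∉ S, (∀ k ∈ S, v j ≤ v k) ∧ ∀ k ∉ S, v k ≤ v j := by
  obtain ⟨S, hS, hSmax⟩ := exists_max_image (powersetCard i univ) (fun S => ∑ k ∈ S, v k)
    (powersetCard_nonempty.2 (by simpa using hi.le))
  rw [mem_powersetCard] at hS
  have hcompl : (univ \ S).Nonempty := by
    rw [← card_pos, card_sdiff_of_subset hS.1, card_univ, hS.2]
    exact Nat.sub_pos_of_lt hi
  obtain ⟨j, hj, hjmax⟩ := exists_max_image (univ \ S) v hcompl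
  have hjS : j ∉ S := by simpa using hj
  refine ⟨S, hS.2, j, hjS, fun k hk => ?_, fun k hk => hjmax k (by simpa using hk)⟩
  have hjerase : j ∉ S.erase k := fun h => hjS (mem_of_mem_erase h)
  have hswap := hSmax (insert j (S.erase k)) <| mem_powersetCard.2
    ⟨subset_univ _, by rw [card_insert_of_notMem hjerase, card_erase_add_one hk, hS.2]⟩
  rw [sum_insert hjerase, sum_erase_eq_sub hk] at hswap
  rwa [add_sub_left_comm, add_le_iff_nonpos_right, sub_nonpos] at hswap

theorem exists_positive_subset_sum_general (N i : ℕ)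
    (m : Fin N → ℝ) (hm : ∀ n, 0 ≤ m n ∧ m n ≤ 1)
    (hlo : (i : ℝ) < ∑ n, m n) (hhi : ∑ n, m n < (i : ℝ) + 1)
    (v : Fin N → ℝ) (w₁ w₂ : ℝ)
    (hpos : 0 < (∑ j, m j * v j) + ((i : ℝ) + 1 - ∑ n, m n) * w₁
      + ((∑ n, m n) - (i : ℝ)) * w₂) :
    ∃ S : Finset (Fin N),
      (S.card = i ∧ 0 < (∑ j ∈ S, v j) + w₁) ∨
      (S.card = i + 1 ∧ 0 < (∑ j ∈ S, v j) + w₂) := by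
  have hiN : i < N := by
    have hle : ∑ n, m n ≤ N := by simpa using sum_le_sum fun n (_ : n ∈ univ) => (hm n).2
    exact_mod_cast hlo.trans_le hle
  obtain ⟨S, hS, j, hj, hge, hle⟩ := exists_card_eq_threshold_notMem v (by simpa using hiN)
  have hbound := sum_mul_le_sum_add_mul_of_threshold m v hm S (v j) hge hle
  rw [hS] at hbound
  by_contra! hneg
  have h₁ := (hneg S).1 hS
  have h₂ := (hneg (insert j S)).2 (by rw [card_insert_of_notMem hj, hS])
  rw [sum_insert hj] at h₂
  linarith [mul_nonpos_of_nonneg_of_nonpos (sub_nonneg.2 hhi.le) h₁,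
    mul_nonpos_of_nonneg_of_nonpos (sub_nonneg.2 hlo.le) h₂]

theorem exists_positive_subset_sum (N i : ℕ) (hN : 2 ≤ N) (hi1 : 1 ≤ i) (hiN : i ≤ N - 1)
    (m : Fin N → ℝ) (hm : ∀ n, 0 ≤ m n ∧ m n ≤ 1)
    (hlo : (i : ℝ) < ∑ n, m n) (hhi : ∑ n, m n < (i : ℝ) + 1)
    (v : Fin N → ℝ) (w₁ w₂ : ℝ)
    (hpos : 0 < (∑ j, m j * v j) + ((i : ℝ) + 1 - ∑ n, m n) * w₁
      + ((∑ n, m n) - (i : ℝ)) * w₂) :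
    ∃ S : Finset (Fin N),
      (S.card = i ∧ 0 < (∑ j ∈ S, v j) + w₁) ∨
      (S.card = i + 1 ∧ 0 < (∑ j ∈ S, v j) + w₂) :=
  exists_positive_subset_sum_general N i m hm hlo hhi v w₁ w₂ hpos
end

section
/- Let N ≥ 1 and K ≥ 1 be integers, let m = (m_1, …, m_N) satisfy 0 ≤ m_n ≤ 1 for all n, and put m_s = ∑_{n=1}^N m_n. If α is feasible for the placement linear program P(m), then the vector β defined by β_ℓ = ∑_{S : |S| = ℓ} α_S for ℓ = 1, …, N is feasible for the relaxed linear program R(m_s), and its objective value satisfies ∑_{ℓ=1}^N β_ℓ·D̃_ℓ = ∑_S α_S·D̃_{|S|}. Consequently, the minimum objective value of R(m_s) is at most D*(m). -/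
open Finset

/-!
Grouping the sets `S` by their size turns a placement `α` into `β_ℓ = ∑_{|S| = ℓ} α_S` without
changing the objective, since `D̃_{|S|}` depends on `S` only through `|S|`. Summing the storage
constraints of `P(m)` over all nodes counts every `α_S` exactly `|S|` times, which is the single
constraint `∑_ℓ ℓ β_ℓ ≤ m_s` of `R(m_s)`. So every value of `P(m)` is a value of `R(m_s)`, and the
latter values are bounded below by `0`.
-/

lemma Dt_nonneg (K ℓ : ℕ) : 0 ≤ Dt K ℓ :=
  sum_nonneg fun _ _ => by positivity

lemma sum_card_fiber_eq_sum_nonempty {M : Type*} [AddCommMonoid M] {N : ℕ}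
    (f : Finset (Fin N) → M) :
    ∑ ℓ : Fin N, ∑ S ∈ univ.filter (fun S : Finset (Fin N) => S.card = (ℓ : ℕ) + 1), f S
      = ∑ S ∈ univ.filter (fun S : Finset (Fin N) => S.Nonempty), f S := by
  have hmaps : ∀ S ∈ univ.filter (fun S : Finset (Fin N) => S.Nonempty),
      S.card - 1 ∈ range N := by
    intro S hS
    have hpos := card_pos.mpr (mem_filter.mp hS).2
    have hle : S.card ≤ N := by simpa using S.card_le_univ
    simpa using (by omega : S.card - 1 < N)
  rw [← sum_fiberwise_of_maps_to hmaps, ← Fin.sum_univ_eq_sum_range]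
  refine sum_congr rfl fun ℓ _ => sum_congr ?_ fun _ _ => rfl
  ext S
  simp only [mem_filter, mem_univ, true_and, ← card_pos]
  omega

lemma sum_sum_filter_mem_eq_sum_card_nsmul {ι M : Type*} [Fintype ι] [DecidableEq ι]
    [AddCommMonoid M] (α : Finset ι → M) :
    ∑ n, ∑ S ∈ univ.filter (fun S : Finset ι => n ∈ S), α S = ∑ S, S.card • α S := by
  rw [sum_comm' (t' := univ) (s' := fun S => S) (by simp)]
  simp only [sum_const]

/-- `cardProfile α ℓ` is `β_{ℓ+1}`, following the indexing of `RFeasible`. -/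
noncomputable def cardProfile {N : ℕ} (α : Finset (Fin N) → ℝ) (ℓ : Fin N) : ℝ :=
  ∑ S ∈ univ.filter (fun S : Finset (Fin N) => S.card = (ℓ : ℕ) + 1), α S

section cardProfile

variable {N : ℕ} {m : Fin N → ℝ} {α : Finset (Fin N) → ℝ}

lemma sum_cardProfile_mul (α : Finset (Fin N) → ℝ) (g : ℕ → ℝ) :
    ∑ ℓ : Fin N, cardProfile α ℓ * g ((ℓ : ℕ) + 1)
      = ∑ S ∈ univ.filter (fun S : Finset (Fin N) => S.Nonempty), α S * g S.card := by
  rw [← sum_card_fiber_eq_sum_nonempty]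
  refine sum_congr rfl fun ℓ _ => ?_
  rw [cardProfile, sum_mul]
  refine sum_congr rfl fun S hS => ?_
  rw [(mem_filter.mp hS).2]

lemma RObj_cardProfile (K : ℕ) (α : Finset (Fin N) → ℝ) :
    RObj N K (cardProfile α) = PObj N K α :=
  sum_cardProfile_mul α (Dt K)

lemma PFeasible.sum_card_mul_le (hα : PFeasible m α) :
    ∑ S, (S.card : ℝ) * α S ≤ ∑ n, m n := by
  simp_rw [← nsmul_eq_mul, ← sum_sum_filter_mem_eq_sum_card_nsmul]
  exact sum_le_sum fun n _ => hα.2.2 n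

lemma PFeasible.rFeasible_cardProfile (hα : PFeasible m α) :
    RFeasible N (∑ n, m n) (cardProfile α) := by
  refine ⟨fun ℓ => sum_nonneg fun S hS => hα.1 S ?_, ?_, ?_⟩
  · exact card_pos.mp (by rw [(mem_filter.mp hS).2]; omega)
  · exact (sum_card_fiber_eq_sum_nonempty α).trans hα.2.1
  · have hsize : ∑ ℓ : Fin N, ((ℓ : ℕ) + 1 : ℝ) * cardProfile α ℓ
        = ∑ S, (S.card : ℝ) * α S := by
      have hempty : ∀ S ∈ univ, (S.card : ℝ) * α S ≠ 0 → S.Nonempty := fun S _ h =>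
        nonempty_iff_ne_empty.mpr (by rintro rfl; simp at h)
      rw [← sum_filter_of_ne hempty]
      simpa [mul_comm] using sum_cardProfile_mul α (fun k => (k : ℝ))
    exact hsize ▸ hα.sum_card_mul_le

end cardProfile

lemma sInf_RObj_le_sInf_PObj (N K : ℕ) (m : Fin N → ℝ) {α : Finset (Fin N) → ℝ}
    (hα : PFeasible m α) :
    sInf {d : ℝ | ∃ β : Fin N → ℝ, RFeasible N (∑ n, m n) β ∧ RObj N K β = d}
      ≤ sInf {d : ℝ | ∃ α' : Finset (Fin N) → ℝ, PFeasible m α' ∧ PObj N K α' = d} := by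
  refine csInf_le_csInf ⟨0, ?_⟩ ⟨PObj N K α, α, hα, rfl⟩ ?_
  · rintro d ⟨β, ⟨hβ, -, -⟩, rfl⟩
    exact sum_nonneg fun n _ => mul_nonneg (hβ n) (Dt_nonneg _ _)
  · rintro d ⟨α', hα', rfl⟩
    exact ⟨cardProfile α', hα'.rFeasible_cardProfile, RObj_cardProfile K α'⟩

theorem placement_to_relaxed_general (N K : ℕ)
    (m : Fin N → ℝ)
    (α : Finset (Fin N) → ℝ) (hα : PFeasible m α) :
    RFeasible N (∑ n, m n)
      (fun ℓ : Fin N =>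
        ∑ S ∈ Finset.univ.filter (fun S : Finset (Fin N) => S.card = (ℓ : ℕ) + 1), α S) ∧
    RObj N K (fun ℓ : Fin N =>
        ∑ S ∈ Finset.univ.filter (fun S : Finset (Fin N) => S.card = (ℓ : ℕ) + 1), α S)
      = PObj N K α ∧
    sInf {d : ℝ | ∃ β : Fin N → ℝ, RFeasible N (∑ n, m n) β ∧ RObj N K β = d}
      ≤ sInf {d : ℝ | ∃ α' : Finset (Fin N) → ℝ, PFeasible m α' ∧ PObj N K α' = d} :=
  ⟨hα.rFeasible_cardProfile, RObj_cardProfile K α, sInf_RObj_le_sInf_PObj N K m hα⟩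

theorem placement_to_relaxed (N K : ℕ) (hN : 1 ≤ N) (hK : 1 ≤ K)
    (m : Fin N → ℝ) (hm : ∀ n, 0 ≤ m n ∧ m n ≤ 1)
    (α : Finset (Fin N) → ℝ) (hα : PFeasible m α) :
    RFeasible N (∑ n, m n)
      (fun ℓ : Fin N =>
        ∑ S ∈ Finset.univ.filter (fun S : Finset (Fin N) => S.card = (ℓ : ℕ) + 1), α S) ∧
    RObj N K (fun ℓ : Fin N =>
        ∑ S ∈ Finset.univ.filter (fun S : Finset (Fin N) => S.card = (ℓ : ℕ) + 1), α S)
      = PObj N K α ∧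
    sInf {d : ℝ | ∃ β : Fin N → ℝ, RFeasible N (∑ n, m n) β ∧ RObj N K β = d}
      ≤ sInf {d : ℝ | ∃ α' : Finset (Fin N) → ℝ, PFeasible m α' ∧ PObj N K α' = d} :=
  placement_to_relaxed_general N K m α hα
end

section
/- Let N ≥ 1 and K ≥ 1 be integers, and let m = (m_1, …, m_N) satisfy 0 ≤ m_n ≤ 1 for all n with ∑_{n=1}^N m_n ≥ 1. Then the minimum objective value of the placement linear program P(m) equals the minimum objective value of the relaxed linear program R(m_s), where m_s = ∑_{n=1}^N m_n. -/
open Finset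

/-!
A placement `α` induces the distribution `β_n = ∑_{|S| = n} α_S` of set sizes, with the same cost
and with `∑ n β_n = ∑_S α_S |S| = ∑_n (load of n) ≤ m_s`.

Conversely, let `β` be feasible for `R(m_s)` and `W = ∑ n β_n ∈ [1, m_s]`. Scale `m` down to loads
`x ≤ m` with `∑ x = W` and realise them by systematic sampling: lay the loads end to end on
`[0, W]` and, for a uniform offset `u ∈ [0, 1]`, take the items whose segment contains a point of
`ℤ - u`. The sampled sets have `⌊W⌋` or `⌊W⌋ + 1` elements and item `n` is taken with probability
exactly `x_n`, so the cost is the linear interpolation of `ℓ ↦ D̃_ℓ` at `W`. Since `D̃` is convex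
in `ℓ`, that is at most `∑ β_n D̃_n`.
-/

open Finset MeasureTheory

theorem ConvexOn.add_mul_slope_le_of_notMem_Ioo {s : Set ℝ} {f : ℝ → ℝ} (hf : ConvexOn ℝ s f)
    {a b v : ℝ} (ha : a ∈ s) (hb : b ∈ s) (hv : v ∈ s) (hab : a < b) (hvab : v ∉ Set.Ioo a b) :
    f a + (v - a) * ((f b - f a) / (b - a)) ≤ f v := by
  have hba : (b - a) * ((f b - f a) / (b - a)) = f b - f a := by
    field_simp [(sub_pos.2 hab).ne']
  rcases lt_or_ge v a with hva | hav
  · have h := hf.slope_mono_adjacent hv hb hva hab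
    rw [div_le_iff₀ (sub_pos.2 hva)] at h
    linarith
  rcases eq_or_lt_of_le hav with rfl | hav
  · simp
  have hbv : b ≤ v := not_lt.1 fun hvb => hvab ⟨hav, hvb⟩
  rcases eq_or_lt_of_le hbv with rfl | hbv
  · linarith
  · have h := hf.slope_mono_adjacent ha hv hab hbv
    rw [le_div_iff₀ (sub_pos.2 hbv)] at h
    nlinarith

theorem Dt_add_mul_sub_le (K : ℕ) {s v : ℕ} (hs : 1 ≤ s) (hv : 1 ≤ v) :
    Dt K s + ((v : ℝ) - s) * (Dt K (s + 1) - Dt K s) ≤ Dt K v := by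
  simp only [Dt, ← Finset.sum_sub_distrib, Finset.mul_sum, ← Finset.sum_add_distrib]
  refine Finset.sum_le_sum fun i _ => ?_
  have hconv : ConvexOn ℝ (Set.Ioi 0) fun t : ℝ => (1 / t) ^ i :=
    (convexOn_zpow (-(i : ℤ))).congr fun t _ => by simp [zpow_neg, one_div, inv_pow]
  have hpos : ∀ k : ℕ, 1 ≤ k → ((k : ℝ)) ∈ Set.Ioi 0 := fun k hk => by
    simp only [Set.mem_Ioi]; exact_mod_cast hk
  have h := hconv.add_mul_slope_le_of_notMem_Ioo (hpos s hs) (hpos (s + 1) (by omega)) (hpos v hv)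
    (by push_cast; linarith) (fun ⟨h1, h2⟩ => by
      have : s < v := by exact_mod_cast h1
      have : v < s + 1 := by exact_mod_cast h2
      omega)
  push_cast at h ⊢
  simpa using h

theorem Int.floor_add_sub_floor_eq_ite {a d : ℝ} (hd0 : 0 ≤ d) (hd1 : d ≤ 1) :
    ⌊a + d⌋ - ⌊a⌋ = if ⌊a⌋ < ⌊a + d⌋ then 1 else 0 := by
  have h1 : ⌊a⌋ ≤ ⌊a + d⌋ := Int.floor_mono (by linarith)
  have h2 : ⌊a + d⌋ ≤ ⌊a⌋ + 1 := by
    rw [← Int.floor_add_one]; exact Int.floor_mono (by linarith)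
  split_ifs <;> omega

theorem intervalIntegrable_floor_add (a b c : ℝ) :
    IntervalIntegrable (fun u => (⌊a + u⌋ : ℝ)) volume b c :=
  Monotone.intervalIntegrable fun u v huv => by gcongr

theorem intervalIntegral.integral_floor_add (a : ℝ) : ∫ u in (0 : ℝ)..1, (⌊a + u⌋ : ℝ) = a := by
  have ha : a = ⌊a⌋ + Int.fract a := (Int.floor_add_fract a).symm
  have hc0 : 0 ≤ 1 - Int.fract a := by linarith [Int.fract_lt_one a]
  have hc1 : 1 - Int.fract a ≤ 1 := by linarith [Int.fract_nonneg a]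
  -- on `[0, 1]` the integrand jumps once, from `⌊a⌋` to `⌊a⌋ + 1`, at `u = 1 - fract a`
  have hleft : ∫ u in (0 : ℝ)..1 - Int.fract a, (⌊a + u⌋ : ℝ)
      = ∫ _ in (0 : ℝ)..1 - Int.fract a, (⌊a⌋ : ℝ) :=
    integral_congr_Ioo_of_le hc0 fun u ⟨hu0, huc⟩ => by
      rw [show ⌊a + u⌋ = ⌊a⌋ from Int.floor_eq_iff.2 ⟨by linarith, by linarith⟩]
  have hright : ∫ u in 1 - Int.fract a..1, (⌊a + u⌋ : ℝ)
      = ∫ _ in 1 - Int.fract a..1, ((⌊a⌋ + 1 : ℤ) : ℝ) :=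
    integral_congr_Ioo_of_le hc1 fun u ⟨hcu, hu1⟩ => by
      rw [show ⌊a + u⌋ = ⌊a⌋ + 1 from
        Int.floor_eq_iff.2 ⟨by push_cast; linarith, by push_cast; linarith⟩]
  rw [← integral_add_adjacent_intervals (intervalIntegrable_floor_add ..)
      (intervalIntegrable_floor_add ..),
    hleft, hright, integral_const, integral_const, smul_eq_mul, smul_eq_mul]
  push_cast
  linarith

section SystematicSampling

variable {N : ℕ} (x : Fin N → ℝ)

def prefixSum (k : ℕ) : ℝ := ∑ i : Fin N with i.val < k, x i

@[simp] theorem prefixSum_zero : prefixSum x 0 = 0 := by simp [prefixSum]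

@[simp] theorem prefixSum_self : prefixSum x N = ∑ i, x i := by
  simp [prefixSum]

theorem prefixSum_succ (n : Fin N) : prefixSum x (n + 1) = prefixSum x n + x n := by
  rw [prefixSum, prefixSum, ← Finset.sum_filter_add_sum_filter_not _ (fun i : Fin N => (i : ℕ) < n)]
  congr 1
  · congr 1; ext i; simp; omega
  · rw [Finset.sum_eq_single_of_mem n (by simp)]
    intro i hi hne; simp at hi; omega

/-- Item `n` is sampled at offset `u` iff its segment `[prefixSum x n, prefixSum x (n + 1))` of the
line of cumulative loads contains a point of `ℤ - u`. -/
noncomputable def sampleSet (u : ℝ) : Finset (Fin N) :=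
  {n | ⌊prefixSum x n + u⌋ < ⌊prefixSum x (n + 1) + u⌋}

theorem measurable_sampleSet : Measurable (sampleSet x) := by
  refine measurable_finset_iff.2 fun n => ?_
  simp only [sampleSet, mem_filter, mem_univ, true_and]
  exact measurableSet_setOfPred.1 <| measurableSet_lt
    (Int.measurable_floor.comp (measurable_const_add _))
    (Int.measurable_floor.comp (measurable_const_add _))

theorem intervalIntegrable_comp_sampleSet (φ : Finset (Fin N) → ℝ) (a b : ℝ) :
    IntervalIntegrable (fun u => φ (sampleSet x u)) volume a b := by
  obtain ⟨C, hC⟩ := (Set.finite_range fun T => ‖φ T‖).bddAbove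
  refine (intervalIntegrable_const (c := C)).mono_fun
    ((measurable_of_countable φ).comp (measurable_sampleSet x)).aestronglyMeasurable ?_
  filter_upwards with u
  exact (hC ⟨_, rfl⟩).trans (le_abs_self C)

noncomputable def systematicSampling (T : Finset (Fin N)) : ℝ :=
  ∫ u in (0 : ℝ)..1, if sampleSet x u = T then 1 else 0

theorem sum_systematicSampling_mul (φ : Finset (Fin N) → ℝ) :
    ∑ T, systematicSampling x T * φ T = ∫ u in (0 : ℝ)..1, φ (sampleSet x u) := by
  simp only [systematicSampling, ← intervalIntegral.integral_mul_const, ite_mul, one_mul, zero_mul]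
  rw [← intervalIntegral.integral_finsetSum fun T _ =>
    intervalIntegrable_comp_sampleSet x (fun S => if S = T then φ T else 0) 0 1]
  simp

theorem systematicSampling_nonneg (T : Finset (Fin N)) : 0 ≤ systematicSampling x T :=
  intervalIntegral.integral_nonneg zero_le_one fun _ _ => by positivity

variable {x}

theorem ite_mem_sampleSet (hx0 : ∀ n, 0 ≤ x n) (hx1 : ∀ n, x n ≤ 1) (u : ℝ) (n : Fin N) :
    (if n ∈ sampleSet x u then 1 else 0 : ℤ) = ⌊prefixSum x (n + 1) + u⌋ - ⌊prefixSum x n + u⌋ := by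
  have h := Int.floor_add_sub_floor_eq_ite (a := prefixSum x n + u) (hx0 n) (hx1 n)
  rw [add_right_comm, ← prefixSum_succ] at h
  simp [sampleSet, h]

theorem card_sampleSet (hx0 : ∀ n, 0 ≤ x n) (hx1 : ∀ n, x n ≤ 1) (u : ℝ) :
    ((sampleSet x u).card : ℤ) = ⌊(∑ n, x n) + u⌋ - ⌊u⌋ := by
  have h := Finset.natCast_card_filter (R := ℤ) (fun n => n ∈ sampleSet x u) univ
  rw [Finset.filter_mem_eq_inter, univ_inter] at h
  rw [h, Finset.sum_congr rfl fun n _ => ite_mem_sampleSet hx0 hx1 u n,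
    Fin.sum_univ_eq_sum_range (fun i => ⌊prefixSum x (i + 1) + u⌋ - ⌊prefixSum x i + u⌋),
    Finset.sum_range_sub (fun i => ⌊prefixSum x i + u⌋)]
  simp

theorem sum_systematicSampling_filter_mem (hx0 : ∀ n, 0 ≤ x n) (hx1 : ∀ n, x n ≤ 1) (n : Fin N) :
    ∑ T with n ∈ T, systematicSampling x T = x n := by
  have h := sum_systematicSampling_mul x fun T => if n ∈ T then 1 else 0
  simp only [mul_ite, mul_one, mul_zero, ← Finset.sum_filter] at h
  rw [h, intervalIntegral.integral_congr (g := fun u =>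
      (⌊prefixSum x (n + 1) + u⌋ : ℝ) - ⌊prefixSum x n + u⌋) fun u _ => by
        dsimp only; rw [← Int.cast_sub, ← ite_mem_sampleSet hx0 hx1 u n]; push_cast; rfl,
    intervalIntegral.integral_sub (intervalIntegrable_floor_add ..) (intervalIntegrable_floor_add ..),
    intervalIntegral.integral_floor_add, intervalIntegral.integral_floor_add, prefixSum_succ]
  ring

theorem sum_systematicSampling_filter_nonempty (hx0 : ∀ n, 0 ≤ x n) (hx1 : ∀ n, x n ≤ 1)
    (hx : 1 ≤ ∑ n, x n) : ∑ T with T.Nonempty, systematicSampling x T = 1 := by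
  have h := sum_systematicSampling_mul x fun T => if T.Nonempty then 1 else 0
  simp only [mul_ite, mul_one, mul_zero, ← Finset.sum_filter] at h
  rw [h, intervalIntegral.integral_congr (g := fun _ => 1) fun u _ => if_pos ?_]
  · simp
  rw [← Finset.card_pos, ← Nat.cast_pos (α := ℤ), card_sampleSet hx0 hx1]
  have := Int.le_floor_add (∑ n, x n) u
  have : 1 ≤ ⌊∑ n, x n⌋ := Int.le_floor.2 (by exact_mod_cast hx)
  omega

theorem card_eq_of_systematicSampling_ne_zero (hx0 : ∀ n, 0 ≤ x n) (hx1 : ∀ n, x n ≤ 1)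
    (hx : 0 ≤ ∑ n, x n) {T : Finset (Fin N)} (hT : systematicSampling x T ≠ 0) :
    T.card = ⌊∑ n, x n⌋₊ ∨ T.card = ⌊∑ n, x n⌋₊ + 1 := by
  obtain ⟨u, rfl⟩ : ∃ u, sampleSet x u = T := by
    by_contra! h
    exact hT (by simp [systematicSampling, h])
  have h1 := Int.le_floor_add (∑ n, x n) u
  have h2 := Int.le_floor_add_floor (∑ n, x n) u
  have h3 := card_sampleSet hx0 hx1 u
  have h4 := Int.natCast_floor_eq_floor hx
  omega

end SystematicSampling

theorem sum_filter_nonempty_mul_card {ι : Type*} [Fintype ι] [DecidableEq ι] (α : Finset ι → ℝ) :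
    ∑ S with S.Nonempty, α S * S.card = ∑ n, ∑ S with n ∈ S, α S := by
  calc ∑ S with S.Nonempty, α S * S.card = ∑ S with S.Nonempty, ∑ _n ∈ S, α S := by
        simp [mul_comm]
    _ = ∑ n, ∑ S with n ∈ S, α S :=
        Finset.sum_comm' fun S n => by simpa using fun h : n ∈ S => ⟨n, h⟩

theorem sum_mul_add_sub_mul {ι : Type*} (t : Finset ι) (w v : ι → ℝ) (hw : ∑ i ∈ t, w i = 1)
    (c s d : ℝ) : ∑ i ∈ t, w i * (c + (v i - s) * d) = c + (∑ i ∈ t, w i * v i - s) * d := by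
  simp only [mul_add, mul_sub, sub_mul, ← mul_assoc, Finset.sum_add_distrib, Finset.sum_sub_distrib,
    ← Finset.sum_mul, hw]
  ring

theorem sum_sum_filter_card_eq_succ {N : ℕ} (f : Finset (Fin N) → ℝ) :
    ∑ n : Fin N, ∑ S with S.card = (n : ℕ) + 1, f S = ∑ S with S.Nonempty, f S := by
  rw [Fin.sum_univ_eq_sum_range (fun n => ∑ S with S.card = n + 1, f S),
    ← Finset.sum_fiberwise_of_maps_to (g := fun S : Finset (Fin N) => S.card - 1) (t := range N)]
  · refine Finset.sum_congr rfl fun n _ => Finset.sum_congr ?_ fun _ _ => rfl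
    ext S
    simp only [mem_filter, mem_univ, true_and, ← Finset.card_pos]
    omega
  · intro S hS
    simp only [mem_filter, mem_univ, true_and, ← Finset.card_pos] at hS
    have := S.card_le_univ
    simp only [Fintype.card_fin] at this
    simp only [mem_range]
    omega

theorem PObj_eq_of_card_mem {N K s : ℕ} {α : Finset (Fin N) → ℝ}
    (hα : ∑ S with S.Nonempty, α S = 1) (hcard : ∀ S, α S ≠ 0 → S.card = s ∨ S.card = s + 1) :
    PObj N K α = Dt K s + (∑ S with S.Nonempty, α S * S.card - s) * (Dt K (s + 1) - Dt K s) := by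
  rw [← sum_mul_add_sub_mul _ _ _ hα, PObj]
  refine Finset.sum_congr rfl fun S _ => ?_
  rcases eq_or_ne (α S) 0 with h | h
  · simp [h]
  · rcases hcard S h with h | h <;> simp [h]

theorem add_mul_sub_le_RObj {N K s : ℕ} (hs : 1 ≤ s) {β : Fin N → ℝ} (hβ0 : ∀ n, 0 ≤ β n)
    (hβ : ∑ n, β n = 1) :
    Dt K s + (∑ n : Fin N, ((n : ℕ) + 1 : ℝ) * β n - s) * (Dt K (s + 1) - Dt K s) ≤ RObj N K β := by
  simp only [mul_comm _ (β _)]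
  rw [← sum_mul_add_sub_mul _ _ _ hβ, RObj]
  refine Finset.sum_le_sum fun n _ => mul_le_mul_of_nonneg_left ?_ (hβ0 n)
  exact_mod_cast Dt_add_mul_sub_le K hs (Nat.succ_pos n)

theorem exists_RFeasible_RObj_eq_PObj {N K : ℕ} {m : Fin N → ℝ} {α : Finset (Fin N) → ℝ}
    (hα : PFeasible m α) : ∃ β, RFeasible N (∑ n, m n) β ∧ RObj N K β = PObj N K α := by
  obtain ⟨hα0, hα1, hload⟩ := hα
  have fiber (g : ℕ → ℝ) : ∑ n : Fin N, g ((n : ℕ) + 1) * ∑ S with S.card = (n : ℕ) + 1, α S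
      = ∑ S with S.Nonempty, α S * g S.card := by
    rw [← sum_sum_filter_card_eq_succ]
    refine Finset.sum_congr rfl fun n _ => ?_
    rw [Finset.mul_sum]
    refine Finset.sum_congr rfl fun S hS => ?_
    rw [(mem_filter.1 hS).2, mul_comm]
  refine ⟨fun n => ∑ S with S.card = (n : ℕ) + 1, α S, ⟨fun n => ?_, ?_, ?_⟩, ?_⟩
  · refine Finset.sum_nonneg fun S hS => hα0 S (Finset.card_pos.1 ?_)
    rw [(mem_filter.1 hS).2]; omega
  · simpa [hα1] using fiber 1
  · have := fiber Nat.cast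
    push_cast at this
    rw [this, sum_filter_nonempty_mul_card]
    exact Finset.sum_le_sum fun n _ => hload n
  · simp only [RObj, PObj, ← fiber (Dt K), mul_comm]

theorem exists_PFeasible_PObj_le_RObj {N : ℕ} (K : ℕ) {m : Fin N → ℝ}
    (hm : ∀ n, 0 ≤ m n ∧ m n ≤ 1) {β : Fin N → ℝ} (hβ : RFeasible N (∑ n, m n) β) :
    ∃ α, PFeasible m α ∧ PObj N K α ≤ RObj N K β := by
  obtain ⟨hβ0, hβ1, hβm⟩ := hβ
  set W := ∑ n : Fin N, ((n : ℕ) + 1 : ℝ) * β n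
  have hW : 1 ≤ W := hβ1 ▸ Finset.sum_le_sum fun n _ =>
    le_mul_of_one_le_left (hβ0 n) (by linarith [(n : ℕ).cast_nonneg (α := ℝ)])
  have hms : 0 < ∑ n, m n := by linarith
  set x : Fin N → ℝ := fun n => W / (∑ n, m n) * m n
  have hxm (n : Fin N) : x n ≤ m n :=
    mul_le_of_le_one_left (hm n).1 ((div_le_one hms).2 hβm)
  have hx0 (n : Fin N) : 0 ≤ x n := mul_nonneg (by positivity) (hm n).1
  have hx1 (n : Fin N) : x n ≤ 1 := (hxm n).trans (hm n).2
  have hx : ∑ n, x n = W := by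
    simp only [x, ← Finset.mul_sum]
    field_simp
  have hα1 := sum_systematicSampling_filter_nonempty hx0 hx1 (hx ▸ hW)
  refine ⟨systematicSampling x, ⟨fun S _ => systematicSampling_nonneg x S, hα1,
    fun n => (sum_systematicSampling_filter_mem hx0 hx1 n).trans_le (hxm n)⟩, ?_⟩
  rw [PObj_eq_of_card_mem (s := ⌊W⌋₊) hα1
      (fun S hS => hx ▸ card_eq_of_systematicSampling_ne_zero hx0 hx1 (by linarith) hS),
    sum_filter_nonempty_mul_card,
    Finset.sum_congr rfl fun n _ => sum_systematicSampling_filter_mem hx0 hx1 n, hx]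
  exact add_mul_sub_le_RObj ((Nat.one_le_floor_iff W).2 hW) hβ0 hβ1

theorem placement_eq_relaxed_general (N K : ℕ)
    (m : Fin N → ℝ) (hm : ∀ n, 0 ≤ m n ∧ m n ≤ 1) :
    sInf {d : ℝ | ∃ α : Finset (Fin N) → ℝ, PFeasible m α ∧ PObj N K α = d}
      = sInf {d : ℝ | ∃ β : Fin N → ℝ, RFeasible N (∑ n, m n) β ∧ RObj N K β = d} := by
  apply csInf_eq_csInf_of_forall_exists_le
  · rintro _ ⟨α, hα, rfl⟩
    obtain ⟨β, hβ, hobj⟩ := exists_RFeasible_RObj_eq_PObj (K := K) hα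
    exact ⟨_, ⟨β, hβ, rfl⟩, hobj.le⟩
  · rintro _ ⟨β, hβ, rfl⟩
    obtain ⟨α, hα, hobj⟩ := exists_PFeasible_PObj_le_RObj K hm hβ
    exact ⟨_, ⟨α, hα, rfl⟩, hobj⟩

theorem placement_eq_relaxed (N K : ℕ) (hN : 1 ≤ N) (hK : 1 ≤ K)
    (m : Fin N → ℝ) (hm : ∀ n, 0 ≤ m n ∧ m n ≤ 1) (hge : 1 ≤ ∑ n, m n) :
    sInf {d : ℝ | ∃ α : Finset (Fin N) → ℝ, PFeasible m α ∧ PObj N K α = d}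
      = sInf {d : ℝ | ∃ β : Fin N → ℝ, RFeasible N (∑ n, m n) β ∧ RObj N K β = d} :=
  placement_eq_relaxed_general N K m hm
end

section
/- Let 0 ≤ m_3 ≤ m_2 ≤ m_1 ≤ 1 with m_s = m_1 + m_2 + m_3 satisfying 1 ≤ m_s ≤ 2 and m_1 + m_3 ≥ 1. Then the assignment α_1 = 2 − m_s, α_2 = α_3 = 0, α_{12} = m_1 + m_2 − 1, α_{13} = m_1 + m_3 − 1, α_{23} = 1 − m_1, α_{123} = 0 is feasible for the N = 3, K = 3 placement linear program with storage vector (m_1, m_2, m_3); its objective value equals 17/4 − (5/4)·m_s; and every feasible point has objective value at least 17/4 − (5/4)·m_s. -/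
/-- Feasibility for the `N = 3`, `K = 3` placement linear program with storage
vector `(m₁, m₂, m₃)`. -/
def Feas3 (m1 m2 m3 a1 a2 a3 a12 a13 a23 a123 : ℝ) : Prop :=
  0 ≤ a1 ∧ 0 ≤ a2 ∧ 0 ≤ a3 ∧ 0 ≤ a12 ∧ 0 ≤ a13 ∧ 0 ≤ a23 ∧ 0 ≤ a123 ∧
  a1 + a2 + a3 + a12 + a13 + a23 + a123 = 1 ∧
  a1 + a12 + a13 + a123 ≤ m1 ∧
  a2 + a12 + a23 + a123 ≤ m2 ∧
  a3 + a13 + a23 + a123 ≤ m3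

/-- Objective of the `N = 3`, `K = 3` placement linear program. -/
noncomputable def Obj3 (a1 a2 a3 a12 a13 a23 a123 : ℝ) : ℝ :=
  3 * (a1 + a2 + a3) + 7 / 4 * (a12 + a13 + a23) + 13 / 9 * a123

/-!
The lower bound is LP duality with the dual certificate `17/4` on the normalisation constraint
and `5/4` on each storage constraint. Summing the storage constraints bounds the total storage
`∑ |S| α_S` by `m_s`; the certificate then has zero reduced cost on singletons and pairs
(`3 = 17/4 - 5/4`, `7/4 = 17/4 - 2·5/4`) and reduced cost `13/9 - 1/2 ≥ 0` on the triple.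
The given point attains the bound because it is supported on singletons and pairs and meets
every storage constraint with equality.
-/

theorem Feas3.total_storage_le {m1 m2 m3 a1 a2 a3 a12 a13 a23 a123 : ℝ}
    (h : Feas3 m1 m2 m3 a1 a2 a3 a12 a13 a23 a123) :
    a1 + a2 + a3 + 2 * (a12 + a13 + a23) + 3 * a123 ≤ m1 + m2 + m3 := by
  obtain ⟨-, -, -, -, -, -, -, -, h1, h2, h3⟩ := h
  linarith

theorem Feas3.le_obj3 {m1 m2 m3 a1 a2 a3 a12 a13 a23 a123 : ℝ}
    (h : Feas3 m1 m2 m3 a1 a2 a3 a12 a13 a23 a123) :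
    17 / 4 - 5 / 4 * (m1 + m2 + m3) ≤ Obj3 a1 a2 a3 a12 a13 a23 a123 := by
  have hstorage := h.total_storage_le
  obtain ⟨-, -, -, -, -, -, h123, hsum, -⟩ := h
  unfold Obj3
  linarith

theorem feas3_regime2_point {m1 m2 m3 : ℝ} (h32 : m3 ≤ m2) (h1 : m1 ≤ 1)
    (hhi : m1 + m2 + m3 ≤ 2) (h13 : 1 ≤ m1 + m3) :
    Feas3 m1 m2 m3 (2 - (m1 + m2 + m3)) 0 0 (m1 + m2 - 1) (m1 + m3 - 1) (1 - m1) 0 := by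
  exact ⟨by linarith, le_rfl, le_rfl, by linarith, by linarith, by linarith, le_rfl,
    by ring, by linarith, by linarith, by linarith⟩

theorem obj3_regime2_point (m1 m2 m3 : ℝ) :
    Obj3 (2 - (m1 + m2 + m3)) 0 0 (m1 + m2 - 1) (m1 + m3 - 1) (1 - m1) 0
      = 17 / 4 - 5 / 4 * (m1 + m2 + m3) := by
  unfold Obj3
  ring

theorem regime2_case1_general (m1 m2 m3 : ℝ)
    (h32 : m3 ≤ m2) (h1 : m1 ≤ 1)
    (hhi : m1 + m2 + m3 ≤ 2)
    (h13 : 1 ≤ m1 + m3) :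
    Feas3 m1 m2 m3 (2 - (m1 + m2 + m3)) 0 0 (m1 + m2 - 1) (m1 + m3 - 1) (1 - m1) 0 ∧
    Obj3 (2 - (m1 + m2 + m3)) 0 0 (m1 + m2 - 1) (m1 + m3 - 1) (1 - m1) 0
      = 17 / 4 - 5 / 4 * (m1 + m2 + m3) ∧
    ∀ a1 a2 a3 a12 a13 a23 a123 : ℝ, Feas3 m1 m2 m3 a1 a2 a3 a12 a13 a23 a123 →
      17 / 4 - 5 / 4 * (m1 + m2 + m3) ≤ Obj3 a1 a2 a3 a12 a13 a23 a123 :=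
  ⟨feas3_regime2_point h32 h1 hhi h13, obj3_regime2_point m1 m2 m3,
    fun _ _ _ _ _ _ _ h => h.le_obj3⟩

theorem regime2_case1 (m1 m2 m3 : ℝ)
    (h3 : 0 ≤ m3) (h32 : m3 ≤ m2) (h21 : m2 ≤ m1) (h1 : m1 ≤ 1)
    (hlo : 1 ≤ m1 + m2 + m3) (hhi : m1 + m2 + m3 ≤ 2)
    (h13 : 1 ≤ m1 + m3) :
    Feas3 m1 m2 m3 (2 - (m1 + m2 + m3)) 0 0 (m1 + m2 - 1) (m1 + m3 - 1) (1 - m1) 0 ∧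
    Obj3 (2 - (m1 + m2 + m3)) 0 0 (m1 + m2 - 1) (m1 + m3 - 1) (1 - m1) 0
      = 17 / 4 - 5 / 4 * (m1 + m2 + m3) ∧
    ∀ a1 a2 a3 a12 a13 a23 a123 : ℝ, Feas3 m1 m2 m3 a1 a2 a3 a12 a13 a23 a123 →
      17 / 4 - 5 / 4 * (m1 + m2 + m3) ≤ Obj3 a1 a2 a3 a12 a13 a23 a123 :=
  regime2_case1_general m1 m2 m3 h32 h1 hhi h13
end

section
/- Let 0 ≤ m_3 ≤ m_2 ≤ m_1 ≤ 1 with m_s = m_1 + m_2 + m_3 satisfying 1 ≤ m_s ≤ 2 and m_1 + m_3 ≤ 1. Then the assignment α_1 = 1 − (m_2 + m_3), α_2 = 1 − (m_1 + m_3), α_3 = m_3, α_{12} = m_s − 1, α_{13} = α_{23} = α_{123} = 0 is feasible for the N = 3, K = 3 placement linear program with storage vector (m_1, m_2, m_3); its objective value equals 17/4 − (5/4)·m_s; and every feasible point has objective value at least 17/4 − (5/4)·m_s. -/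
theorem obj3_eq_dual_combination (a1 a2 a3 a12 a13 a23 a123 : ℝ) :
    Obj3 a1 a2 a3 a12 a13 a23 a123 =
      17 / 4 * (a1 + a2 + a3 + a12 + a13 + a23 + a123)
        - 5 / 4 * ((a1 + a2 + a3) + 2 * (a12 + a13 + a23) + 3 * a123)
        + 17 / 18 * a123 := by
  unfold Obj3
  ring

namespace Feas3

variable {m1 m2 m3 a1 a2 a3 a12 a13 a23 a123 : ℝ}

theorem total_storage_le_s13 (h : Feas3 m1 m2 m3 a1 a2 a3 a12 a13 a23 a123) :
    (a1 + a2 + a3) + 2 * (a12 + a13 + a23) + 3 * a123 ≤ m1 + m2 + m3 := by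
  obtain ⟨-, -, -, -, -, -, -, -, c1, c2, c3⟩ := h
  linarith

theorem obj3_ge (h : Feas3 m1 m2 m3 a1 a2 a3 a12 a13 a23 a123) :
    17 / 4 - 5 / 4 * (m1 + m2 + m3) ≤ Obj3 a1 a2 a3 a12 a13 a23 a123 := by
  have hstorage := h.total_storage_le_s13
  obtain ⟨-, -, -, -, -, -, h123, hmass, -⟩ := h
  rw [obj3_eq_dual_combination, hmass]
  linarith

end Feas3

theorem feas3_pairwise_point {m1 m2 m3 : ℝ} (h3 : 0 ≤ m3) (h21 : m2 ≤ m1)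
    (hlo : 1 ≤ m1 + m2 + m3) (h13 : m1 + m3 ≤ 1) :
    Feas3 m1 m2 m3 (1 - (m2 + m3)) (1 - (m1 + m3)) m3 (m1 + m2 + m3 - 1) 0 0 0 := by
  exact ⟨by linarith, by linarith, h3, by linarith, le_rfl, le_rfl, le_rfl,
    by ring, by linarith, by linarith, by linarith⟩

theorem obj3_pairwise_point (m1 m2 m3 : ℝ) :
    Obj3 (1 - (m2 + m3)) (1 - (m1 + m3)) m3 (m1 + m2 + m3 - 1) 0 0 0
      = 17 / 4 - 5 / 4 * (m1 + m2 + m3) := by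
  unfold Obj3
  ring

theorem regime2_case2_general (m1 m2 m3 : ℝ)
    (h3 : 0 ≤ m3) (h21 : m2 ≤ m1)
    (hlo : 1 ≤ m1 + m2 + m3)
    (h13 : m1 + m3 ≤ 1) :
    Feas3 m1 m2 m3 (1 - (m2 + m3)) (1 - (m1 + m3)) m3 (m1 + m2 + m3 - 1) 0 0 0 ∧
    Obj3 (1 - (m2 + m3)) (1 - (m1 + m3)) m3 (m1 + m2 + m3 - 1) 0 0 0
      = 17 / 4 - 5 / 4 * (m1 + m2 + m3) ∧
    ∀ a1 a2 a3 a12 a13 a23 a123 : ℝ, Feas3 m1 m2 m3 a1 a2 a3 a12 a13 a23 a123 →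
      17 / 4 - 5 / 4 * (m1 + m2 + m3) ≤ Obj3 a1 a2 a3 a12 a13 a23 a123 :=
  ⟨feas3_pairwise_point h3 h21 hlo h13, obj3_pairwise_point m1 m2 m3,
    fun _ _ _ _ _ _ _ h => h.obj3_ge⟩

theorem regime2_case2 (m1 m2 m3 : ℝ)
    (h3 : 0 ≤ m3) (h32 : m3 ≤ m2) (h21 : m2 ≤ m1) (h1 : m1 ≤ 1)
    (hlo : 1 ≤ m1 + m2 + m3) (hhi : m1 + m2 + m3 ≤ 2)
    (h13 : m1 + m3 ≤ 1) :
    Feas3 m1 m2 m3 (1 - (m2 + m3)) (1 - (m1 + m3)) m3 (m1 + m2 + m3 - 1) 0 0 0 ∧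
    Obj3 (1 - (m2 + m3)) (1 - (m1 + m3)) m3 (m1 + m2 + m3 - 1) 0 0 0
      = 17 / 4 - 5 / 4 * (m1 + m2 + m3) ∧
    ∀ a1 a2 a3 a12 a13 a23 a123 : ℝ, Feas3 m1 m2 m3 a1 a2 a3 a12 a13 a23 a123 →
      17 / 4 - 5 / 4 * (m1 + m2 + m3) ≤ Obj3 a1 a2 a3 a12 a13 a23 a123 :=
  regime2_case2_general m1 m2 m3 h3 h21 hlo h13
end
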